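/- arXiv:1312.4636 — 8 statements merged into one kernel-verified Lean document; each statement's English description precedes it below -/
import Mathlib

section
/- Let A be a commutative R-algebra and t ∈ A a non-zero-divisor. If the localization A_t and the quotient A/(t) are both flat as R-modules, then A is flat as an R-module. -/
/-! Fix an ideal `I` of `R`; we must show that `A ⊗ I → A ⊗ R` is injective. Since `A/(t)` is
flat, tensoring `0 → A →t A → A/(t) → 0` with `I` stays exact, so `t` is a non-zero-divisor on
`A ⊗ I`. Hence `A ⊗ I` embeds into its localization `A_t ⊗ I`, which embeds into `A_t ⊗ R`
because `A_t` is flat, and this composite factors through `A ⊗ I → A ⊗ R`. -/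

open TensorProduct LinearMap Function

theorem LinearMap.lTensor_rTensor_comm {R X Y U V : Type*} [CommSemiring R]
    [AddCommMonoid X] [Module R X] [AddCommMonoid Y] [Module R Y]
    [AddCommMonoid U] [Module R U] [AddCommMonoid V] [Module R V]
    (p : X →ₗ[R] Y) (q : U →ₗ[R] V) (v : U ⊗[R] X) :
    p.lTensor V (q.rTensor X v) = q.rTensor Y (p.lTensor U v) := by
  rw [← comp_apply, ← comp_apply, lTensor_comp_rTensor, rTensor_comp_lTensor]

section

variable {R : Type*} [CommRing R]

/-- `Tor₁(N'', M) = 0` for flat `N''`, in the form of a diagram chase along a free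
presentation `0 → K → R^(M) → M → 0`. -/
theorem LinearMap.rTensor_injective_of_exact_of_flat {N N' N'' : Type*} (M : Type*)
    [AddCommGroup N] [Module R N] [AddCommGroup N'] [Module R N']
    [AddCommGroup N''] [Module R N''] [AddCommGroup M] [Module R M] [Module.Flat R N'']
    {f : N →ₗ[R] N'} {g : N' →ₗ[R] N''} (hf : Injective f) (hfg : Exact f g)
    (hg : Surjective g) : Injective (f.rTensor M) := by
  let π : (M →₀ R) →ₗ[R] M := Finsupp.linearCombination R _root_.id
  have hπ : Surjective π := Finsupp.linearCombination_id_surjective R M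
  let K := ker π
  let ι : K →ₗ[R] (M →₀ R) := K.subtype
  have hιπ : Exact ι π := π.exact_subtype_ker_map
  rw [injective_iff_map_eq_zero]
  intro x hx
  obtain ⟨y, rfl⟩ := lTensor_surjective N hπ x
  obtain ⟨z, hz⟩ : ∃ z, ι.lTensor N' z = f.rTensor _ y := by
    refine (lTensor_exact (M := K) (N := M →₀ R) (P := M) N' hιπ hπ _).mp ?_
    rw [lTensor_rTensor_comm, hx]
  have hgz : g.rTensor _ z = 0 := by
    apply Module.Flat.lTensor_preserves_injective_linearMap ι K.injective_subtype
    rw [map_zero, lTensor_rTensor_comm, hz, ← comp_apply, ← rTensor_comp,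
      hfg.linearMap_comp_eq_zero, rTensor_zero, zero_apply]
  obtain ⟨w, rfl⟩ := (rTensor_exact K hfg hg z).mp hgz
  have hy : y = ι.lTensor N w := by
    apply Module.Flat.rTensor_preserves_injective_linearMap f hf
    rw [← hz, lTensor_rTensor_comm]
  rw [hy, ← comp_apply, ← lTensor_comp, hιπ.linearMap_comp_eq_zero,
    lTensor_zero, zero_apply]

theorem exact_mulLeft_mkₐ_span_singleton {A : Type*} [CommRing A] [Algebra R A] (t : A) :
    Exact (mulLeft R t) (Ideal.Quotient.mkₐ R (Ideal.span {t})).toLinearMap := by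
  intro y
  simp [Ideal.Quotient.eq_zero_iff_mem, Ideal.mem_span_singleton', mul_comm]

theorem TensorProduct.smul_eq_rTensor_mulLeft {A M : Type*} [CommRing A] [Algebra R A]
    [AddCommGroup M] [Module R M] (a : A) (z : A ⊗[R] M) :
    a • z = (mulLeft R a).rTensor M z := by
  induction z using TensorProduct.induction_on with
  | zero => simp
  | tmul b m => simp [smul_tmul']
  | add u v hu hv => simp [hu, hv]

theorem IsSMulRegular.tensorProduct_of_flat_quotient {A : Type*} [CommRing A] [Algebra R A]
    (M : Type*) [AddCommGroup M] [Module R M] {t : A} (ht : IsSMulRegular A t)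
    [Module.Flat R (A ⧸ Ideal.span {t})] : IsSMulRegular (A ⊗[R] M) t := by
  have hmul : Injective (mulLeft R t) := ht
  have := (mulLeft R t).rTensor_injective_of_exact_of_flat M hmul
    (exact_mulLeft_mkₐ_span_singleton t) (Ideal.Quotient.mkₐ_surjective R _)
  simpa only [IsSMulRegular, funext (smul_eq_rTensor_mulLeft (M := M) t)] using this

theorem IsLocalization.Away.rTensor_injective_of_isSMulRegular {A : Type*} [CommRing A] [Algebra R A]
    (Aₜ M : Type*) [CommRing Aₜ] [Algebra A Aₜ] [Algebra R Aₜ] [IsScalarTower R A Aₜ]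
    [AddCommGroup M] [Module R M] {t : A} [IsLocalization.Away t Aₜ]
    (ht : IsSMulRegular (A ⊗[R] M) t) :
    Injective ((IsScalarTower.toAlgHom R A Aₜ).toLinearMap.rTensor M) := by
  show Injective (AlgebraTensorModule.rTensor R M (Algebra.linearMap A Aₜ))
  rw [IsLocalizedModule.injective_iff_isRegular (Submonoid.powers t)]
  rintro ⟨_, n, rfl⟩
  exact ht.pow n

end

/-- Let `A` be a commutative `R`-algebra and `t ∈ A` a non-zero-divisor.
If the localization `A_t` (here: any algebra `Aloc` realizing the localization of `A` away
from `t`) and the quotient `A/(t)` are both flat as `R`-modules, then `A` is flat as an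
`R`-module. -/
theorem stmt0 {R A : Type*} [CommRing R] [CommRing A] [Algebra R A]
    (t : A) (ht : ∀ x : A, t * x = 0 → x = 0)
    (Aloc : Type*) [CommRing Aloc] [Algebra A Aloc] [Algebra R Aloc]
    [IsScalarTower R A Aloc] [IsLocalization.Away t Aloc]
    (hloc : Module.Flat R Aloc)
    (hquot : Module.Flat R (A ⧸ Ideal.span {t})) :
    Module.Flat R A := by
  rw [Module.Flat.iff_lTensor_injective']
  intro I
  let φ := (IsScalarTower.toAlgHom R A Aloc).toLinearMap
  have hφ : Injective (φ.rTensor I) :=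
    IsLocalization.Away.rTensor_injective_of_isSMulRegular Aloc I
      ((IsSMulRegular.of_right_eq_zero_of_smul ht).tensorProduct_of_flat_quotient I)
  have hsq : φ.rTensor R ∘ I.subtype.lTensor A = I.subtype.lTensor Aloc ∘ φ.rTensor I :=
    funext fun v => (lTensor_rTensor_comm I.subtype φ v).symm
  have hcomp : Injective (φ.rTensor R ∘ I.subtype.lTensor A) :=
    hsq ▸ (Module.Flat.iff_lTensor_injective'.mp hloc I).comp hφ
  exact hcomp.of_comp
end

section
/- Let v_1, …, v_n ∈ ℝ^n be vectors of the form v_i = e_i − a_i e_{σ(i)}, where 0 ≤ a_i < 1 for each i, σ : {1,…,n} → {1,…,n} is an arbitrary function, and e_1,…,e_n is the standard basis. Then the convex cone ℝ_{≥0} v_1 + ⋯ + ℝ_{≥0} v_n contains every standard basis vector e_i. -/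
/-!
Along the orbit `i, σ i, σ² i, …` the generators `vⱼ = eⱼ - aⱼ e_{σ j}` telescope: with
`p_N = a_i a_{σ i} ⋯ a_{σ^{N-1} i}` one has `∑_{k<N} p_k v_{σ^k i} = e_i - p_N e_{σ^N i}`.
The orbit eventually enters a cycle `σ^L x = x`; around it the sum is `(1 - q) e_x` with
`q < 1`, so `e_x` lies in the cone, and then so does `e_i = (e_i - p_N e_x) + p_N e_x`.
-/

open Finset Function PointedCone

theorem PointedCone.mem_hull_range_iff_exists_nonneg {R E ι : Type*} [Semiring R]
    [PartialOrder R] [IsOrderedRing R] [AddCommMonoid E] [Module R E] [Fintype ι]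
    {v : ι → E} {x : E} :
    x ∈ hull R (Set.range v) ↔ ∃ c : ι → R, (∀ j, 0 ≤ c j) ∧ ∑ j, c j • v j = x := by
  rw [Submodule.mem_span_range_iff_exists_fun]
  constructor
  · rintro ⟨c, rfl⟩
    exact ⟨fun j => c j, fun j => (c j).2, rfl⟩
  · rintro ⟨c, hc, rfl⟩
    exact ⟨fun j => ⟨c j, hc j⟩, rfl⟩

theorem Function.exists_isPeriodicPt_iterate {α : Type*} [Finite α] (f : α → α) (x : α) :
    ∃ N L, 0 < L ∧ IsPeriodicPt f L (f^[N] x) := by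
  obtain ⟨m, n, hne, heq⟩ := Finite.exists_ne_map_eq_of_infinite fun k => f^[k] x
  wlog hmn : m < n generalizing m n
  · exact this n m hne.symm heq.symm (hne.lt_or_gt.resolve_left hmn)
  refine ⟨m, n - m, Nat.sub_pos_of_lt hmn, ?_⟩
  rw [IsPeriodicPt, IsFixedPt, ← iterate_add_apply, Nat.sub_add_cancel hmn.le]
  exact heq.symm

theorem sum_range_prod_smul_sub_smul_iterate {R M ι : Type*} [CommRing R] [AddCommGroup M]
    [Module R M] (e : ι → M) (a : ι → R) (σ : ι → ι) (i : ι) (N : ℕ) :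
    ∑ k ∈ range N, (∏ l ∈ range k, a (σ^[l] i)) • (e (σ^[k] i) - a (σ^[k] i) • e (σ (σ^[k] i)))
      = e i - (∏ l ∈ range N, a (σ^[l] i)) • e (σ^[N] i) := by
  induction N with
  | zero => simp
  | succ N ih =>
    rw [sum_range_succ, ih, prod_range_succ, iterate_succ_apply', smul_sub, mul_smul]
    abel

section

variable {𝕜 M ι : Type*} [Field 𝕜] [LinearOrder 𝕜] [IsStrictOrderedRing 𝕜] [AddCommGroup M]
  [Module 𝕜 M] {e : ι → M} {a : ι → 𝕜} {σ : ι → ι}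

theorem sub_prod_smul_iterate_mem_hull (ha0 : ∀ j, 0 ≤ a j) (i : ι) (N : ℕ) :
    e i - (∏ l ∈ range N, a (σ^[l] i)) • e (σ^[N] i) ∈
      hull 𝕜 (Set.range fun j => e j - a j • e (σ j)) := by
  rw [← sum_range_prod_smul_sub_smul_iterate]
  exact sum_mem fun k _ => smul_mem _ (prod_nonneg fun l _ => ha0 _)
    (subset_hull ⟨σ^[k] i, rfl⟩)

theorem mem_hull_of_isPeriodicPt (ha0 : ∀ j, 0 ≤ a j) (ha1 : ∀ j, a j < 1) {x : ι} {L : ℕ}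
    (hL : 0 < L) (hx : IsPeriodicPt σ L x) :
    e x ∈ hull 𝕜 (Set.range fun j => e j - a j • e (σ j)) := by
  have hprod : ∏ l ∈ range L, a (σ^[l] x) < 1 := by
    obtain ⟨L, rfl⟩ := Nat.exists_eq_add_one_of_ne_zero hL.ne'
    rw [prod_range_succ]
    exact mul_lt_one_of_nonneg_of_lt_one_right
      (prod_le_one (fun l _ => ha0 _) fun l _ => (ha1 _).le) (ha0 _) (ha1 _)
  have hmem := sub_prod_smul_iterate_mem_hull (e := e) (σ := σ) ha0 x L
  rw [hx.eq] at hmem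
  exact (smul_mem_iff _ (sub_pos.2 hprod)).1 (by rwa [sub_smul, one_smul])

theorem mem_hull_sub_smul_of_lt_one [Finite ι] (ha0 : ∀ j, 0 ≤ a j) (ha1 : ∀ j, a j < 1)
    (i : ι) : e i ∈ hull 𝕜 (Set.range fun j => e j - a j • e (σ j)) := by
  obtain ⟨N, L, hL, hper⟩ := exists_isPeriodicPt_iterate σ i
  rw [← sub_add_cancel (e i) ((∏ l ∈ range N, a (σ^[l] i)) • e (σ^[N] i))]
  exact add_mem (sub_prod_smul_iterate_mem_hull ha0 i N)
    (smul_mem _ (prod_nonneg fun l _ => ha0 _) (mem_hull_of_isPeriodicPt ha0 ha1 hL hper))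

end

/-- Let `v₁, …, vₙ ∈ ℝⁿ` be vectors of the form `vᵢ = eᵢ − aᵢ e_{σ(i)}`,
where `0 ≤ aᵢ < 1` and `σ : {1,…,n} → {1,…,n}` is an arbitrary function.  Then the convex
cone `ℝ_{≥0} v₁ + ⋯ + ℝ_{≥0} vₙ` contains every standard basis vector `eᵢ`. -/
theorem stmt1 (n : ℕ) (a : Fin n → ℝ) (σ : Fin n → Fin n)
    (ha0 : ∀ i, 0 ≤ a i) (ha1 : ∀ i, a i < 1)
    (v : Fin n → Fin n → ℝ)
    (hv : ∀ i, v i = (Pi.single i 1 : Fin n → ℝ) - a i • (Pi.single (σ i) 1 : Fin n → ℝ))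
    (i : Fin n) :
    ∃ c : Fin n → ℝ, (∀ j, 0 ≤ c j) ∧
      (Pi.single i 1 : Fin n → ℝ) = ∑ j : Fin n, c j • v j := by
  obtain rfl : v = fun j => Pi.single j 1 - a j • Pi.single (σ j) 1 := funext hv
  obtain ⟨c, hc, hsum⟩ := mem_hull_range_iff_exists_nonneg.1
    (mem_hull_sub_smul_of_lt_one (e := fun j => (Pi.single j 1 : Fin n → ℝ)) ha0 ha1 i)
  exact ⟨c, hc, hsum.symm⟩
end

section
/- Let 𝒜 be an associative algebra (over any commutative ring) with generators D_1, …, D_n and defining relations ∑_{i=1}^r D_i D_{r+1−i} = 0 for r = 1, …, n. Set S = ∑_{i=2}^n D_i D_{n+2−i}. Then D_1 S − S D_1 = 0. -/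
/-!
Put `φ = ∑ₖ D_{k+1} Xᵏ`, a power series with coefficients in the algebra. Its square has
coefficients `coeff_{r-1} (φ²) = ∑_{i=1}^r Dᵢ D_{r+1−i}`, so the relations say `φ² = O(Xⁿ)`,
with leading coefficient `P = D₁D_{n+1} + S + D_{n+1}D₁`. Comparing the `n`-th coefficients of
`φ · φ²` and `φ² · φ` (associativity) gives `D₁ P = P D₁`, and the two extra terms of `P`
cancel in the commutator because `D₁² = 0`.
-/

open PowerSeries Finset

namespace PowerSeries

variable {R : Type*} [Semiring R] {n : ℕ} {φ : R⟦X⟧}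

theorem coeff_mul_of_X_pow_dvd (h : X ^ n ∣ φ) (ψ : R⟦X⟧) :
    coeff n (φ * ψ) = coeff n φ * coeff 0 ψ := by
  obtain ⟨g, rfl⟩ := h
  simp only [mul_assoc, coeff_X_pow_mul', le_refl, if_true, Nat.sub_self,
    coeff_zero_eq_constantCoeff_apply, map_mul]

theorem coeff_mul_of_X_pow_dvd_right (h : X ^ n ∣ φ) (ψ : R⟦X⟧) :
    coeff n (ψ * φ) = coeff 0 ψ * coeff n φ := by
  obtain ⟨g, rfl⟩ := h
  rw [← mul_assoc, ← X_pow_mul]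
  simp only [mul_assoc, coeff_X_pow_mul', le_refl, if_true, Nat.sub_self,
    coeff_zero_eq_constantCoeff_apply, map_mul]

theorem commute_coeff_zero_coeff_mul_self (h : X ^ n ∣ φ * φ) :
    Commute (coeff 0 φ) (coeff n (φ * φ)) := by
  have := congrArg (coeff n) (mul_assoc φ φ φ)
  rwa [coeff_mul_of_X_pow_dvd h, coeff_mul_of_X_pow_dvd_right h, eq_comm] at this

theorem coeff_mk_succ_mul_self {A : Type*} [Semiring A] (D : ℕ → A) (k : ℕ) :
    coeff k (mk (fun j ↦ D (j + 1)) * mk (fun j ↦ D (j + 1))) =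
      ∑ i ∈ Icc 1 (k + 1), D i * D (k + 2 - i) := by
  rw [coeff_mul, Nat.sum_antidiagonal_eq_sum_range_succ (fun a b ↦ coeff a _ * coeff b _),
    range_eq_Ico, ← Ico_add_one_right_eq_Icc, ← zero_add 1, ← sum_Ico_add']
  refine sum_congr rfl fun i hi ↦ ?_
  rw [mem_Ico] at hi
  simp only [coeff_mk]
  congr 2
  omega

end PowerSeries

theorem Finset.sum_Icc_succ_top_eq_add_sum_add {M : Type*} [AddCommMonoid M] {a b : ℕ}
    (hab : a ≤ b) (f : ℕ → M) :
    ∑ i ∈ Icc a (b + 1), f i = f a + ∑ i ∈ Icc (a + 1) b, f i + f (b + 1) := by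
  rw [sum_Icc_succ_top (by omega), Icc_eq_cons_Ioc hab, sum_cons, Icc_add_one_left_eq_Ioc]

theorem stmt2_general {A : Type*} [Ring A] (n : ℕ) (D : ℕ → A)
    (hrel : ∀ r : ℕ, 1 ≤ r → r ≤ n →
      ∑ i ∈ Finset.Icc 1 r, D i * D (r + 1 - i) = 0) :
    D 1 * (∑ i ∈ Finset.Icc 2 n, D i * D (n + 2 - i)) -
      (∑ i ∈ Finset.Icc 2 n, D i * D (n + 2 - i)) * D 1 = 0 := by
  rcases Nat.eq_zero_or_pos n with rfl | hn
  · simp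
  set S := ∑ i ∈ Icc 2 n, D i * D (n + 2 - i)
  have hD11 : D 1 * D 1 = 0 := by simpa using hrel 1 le_rfl hn
  have hdvd :
      X ^ n ∣ PowerSeries.mk (fun j ↦ D (j + 1)) * PowerSeries.mk (fun j ↦ D (j + 1)) :=
    X_pow_dvd_iff.2 fun m hm ↦ by
      rw [coeff_mk_succ_mul_self]
      exact hrel (m + 1) (by omega) hm
  have hcomm : Commute (D 1) (D 1 * D (n + 1) + S + D (n + 1) * D 1) := by
    have := commute_coeff_zero_coeff_mul_self hdvd
    rwa [coeff_mk_succ_mul_self, sum_Icc_succ_top_eq_add_sum_add hn, coeff_mk, zero_add,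
      show n + 2 - 1 = n + 1 by omega, show n + 2 - (n + 1) = 1 by omega] at this
  calc D 1 * S - S * D 1
      = D 1 * (D 1 * D (n + 1) + S + D (n + 1) * D 1)
          - (D 1 * D (n + 1) + S + D (n + 1) * D 1) * D 1
          - D 1 * D 1 * D (n + 1) + D (n + 1) * (D 1 * D 1) := by noncomm_ring
    _ = 0 := by rw [hcomm.eq, hD11, zero_mul, mul_zero, sub_self, sub_zero, add_zero]

/-- Let `𝒜` be an associative algebra (over any commutative ring) with
generators `D₁, …, Dₙ` and defining relations `∑_{i=1}^r Dᵢ D_{r+1−i} = 0` for `r = 1, …, n`.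
Set `S = ∑_{i=2}^n Dᵢ D_{n+2−i}`.  Then `D₁ S − S D₁ = 0`.

(Equivalently, and as formalized here: in any associative algebra `A` over a commutative
ring containing elements `D₁, …, Dₙ` satisfying the relations above, the identity
`D₁ S − S D₁ = 0` holds; applied to the universal example — the quotient of the free
algebra by the relations — this is exactly the statement above.) -/
theorem stmt2 {R A : Type*} [CommRing R] [Ring A] [Algebra R A] (n : ℕ) (D : ℕ → A)
    (hrel : ∀ r : ℕ, 1 ≤ r → r ≤ n →
      ∑ i ∈ Finset.Icc 1 r, D i * D (r + 1 - i) = 0) :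
    D 1 * (∑ i ∈ Finset.Icc 2 n, D i * D (n + 2 - i)) -
      (∑ i ∈ Finset.Icc 2 n, D i * D (n + 2 - i)) * D 1 = 0 :=
  stmt2_general n D hrel
end

section
/- Let S be a ℤ-graded commutative ring, S̄ ⊆ S a graded subring, and K ⊆ S a homogeneous ideal such that S = K ⊕ S̄ as graded abelian groups. Let J ⊆ S be a homogeneous ideal containing K, so that J = K ⊕ J̄ where J̄ = J ∩ S̄ is a homogeneous ideal of S̄. Fix an integer n; let S′ ⊆ S be the subring generated by the elements of S of degree ≤ n, let J′ ⊆ S′ be the ideal of S′ generated by elements of J of degree ≤ n, and define S̄′ ⊆ S̄ and J̄′ ⊆ S̄′ analogously. Then the natural ring homomorphism S′/J′ → S̄′/J̄′ is an isomorphism. -/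
/-!
The projection `π : S → S̄` along `K` is a ring homomorphism, and since `K` and `S̄` are graded
it commutes with taking homogeneous components; so it preserves "degree `≤ n`", maps `S′` into
`S̄′` and, as `π x = x - (x - π x)` with `x - π x ∈ K ⊆ J`, maps `J′` into `J̄′`. It is a
retraction of `S̄′ ⊆ S′`, and `s - π s ∈ J′` for all `s ∈ S′`: for a generator `s`, the element
`s - π s` is itself a generator of `J′`, and `s ↦ s mod J′` and `s ↦ π s mod J′` are ring maps
agreeing on generators.
-/

open DirectSum

theorem Subring.closure_closure_coe_preimage {R : Type*} [Ring R] {s : Set R} :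
    closure (((↑) : closure s → R) ⁻¹' s) = ⊤ :=
  eq_top_iff.2 fun x _ ↦ Subtype.recOn x fun _ hx' ↦
    closure_induction (fun _ h ↦ subset_closure h) (zero_mem _) (one_mem _)
      (fun _ _ _ _ ↦ add_mem) (fun _ _ ↦ neg_mem) (fun _ _ _ _ ↦ mul_mem) hx'

theorem Ideal.forall_sub_map_mem_of_closure_eq_top {R : Type*} [CommRing R] {G : Set R}
    (hG : Subring.closure G = ⊤) (φ : R →+* R) (I : Ideal R) (h : ∀ g ∈ G, g - φ g ∈ I)
    (r : R) : r - φ r ∈ I := by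
  have hext : Ideal.Quotient.mk I = (Ideal.Quotient.mk I).comp φ :=
    RingHom.eq_of_eqOn_set_dense hG fun g hg ↦ Ideal.Quotient.eq.mpr (h g hg)
  exact Ideal.Quotient.eq.mp (RingHom.congr_fun hext r)

section Retraction

variable {A B : Type*} [CommRing A] [CommRing B] {ι : B →+* A} {ρ : A →+* B}
  {I : Ideal A} {I' : Ideal B}

def Ideal.quotientEquivOfLeftInverse (hρι : Function.LeftInverse ρ ι) (hι : I' ≤ I.comap ι)
    (hρ : I ≤ I'.comap ρ) (hker : ∀ a, a - ι (ρ a) ∈ I) : A ⧸ I ≃+* B ⧸ I' :=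
  RingEquiv.ofRingHom (Ideal.quotientMap I' ρ hρ) (Ideal.quotientMap I ι hι)
    (Ideal.Quotient.ringHom_ext <| RingHom.ext fun b ↦ by simp [hρι b])
    (Ideal.Quotient.ringHom_ext <| RingHom.ext fun a ↦ by
      simpa using (Ideal.Quotient.eq.mpr (hker a)).symm)

theorem Ideal.quotientEquivOfLeftInverse_mk (hρι : Function.LeftInverse ρ ι)
    (hι : I' ≤ I.comap ι) (hρ : I ≤ I'.comap ρ) (hker : ∀ a, a - ι (ρ a) ∈ I) (a : A) :
    Ideal.quotientEquivOfLeftInverse hρι hι hρ hker (Ideal.Quotient.mk I a) =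
      Ideal.Quotient.mk I' (ρ a) :=
  rfl

end Retraction

namespace Subring

variable {R : Type*} [CommRing R] {B : Subring R} {K : Ideal R}
  (hdisj : Disjoint K.toAddSubgroup B.toAddSubgroup) (hsup : ∀ r, ∃ x ∈ K, ∃ y ∈ B, r = x + y)

noncomputable def equivQuotientOfCompl : B ≃+* R ⧸ K :=
  RingEquiv.ofBijective ((Ideal.Quotient.mk K).comp B.subtype)
    ⟨(injective_iff_map_eq_zero _).mpr fun b hb ↦ Subtype.ext <|
        AddSubgroup.disjoint_def.mp hdisj (Ideal.Quotient.eq_zero_iff_mem.mp hb) b.2,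
      fun q ↦ by
        obtain ⟨r, rfl⟩ := Ideal.Quotient.mk_surjective q
        obtain ⟨x, hx, y, hy, rfl⟩ := hsup r
        exact ⟨⟨y, hy⟩, Ideal.Quotient.eq.mpr (by simpa using K.neg_mem hx)⟩⟩

/-- The projection `R = K ⊕ B → B` along `K`. -/
noncomputable def projOfCompl : R →+* B :=
  (equivQuotientOfCompl hdisj hsup).symm.toRingHom.comp (Ideal.Quotient.mk K)

theorem projOfCompl_of_mem {b : R} (hb : b ∈ B) : projOfCompl hdisj hsup b = ⟨b, hb⟩ :=
  (equivQuotientOfCompl hdisj hsup).symm_apply_apply ⟨b, hb⟩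

theorem projOfCompl_eq_zero_of_mem {k : R} (hk : k ∈ K) : projOfCompl hdisj hsup k = 0 := by
  simp [projOfCompl, Ideal.Quotient.eq_zero_iff_mem.mpr hk]

theorem sub_projOfCompl_mem (r : R) : r - projOfCompl hdisj hsup r ∈ K := by
  refine Ideal.Quotient.eq.mp ?_
  exact ((equivQuotientOfCompl hdisj hsup).apply_symm_apply (Ideal.Quotient.mk K r)).symm

theorem coe_projOfCompl_mem {J : Ideal R} (hKJ : K ≤ J) {x : R} (hx : x ∈ J) :
    (projOfCompl hdisj hsup x : R) ∈ J := by
  simpa using J.sub_mem hx (hKJ (sub_projOfCompl_mem hdisj hsup x))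

theorem coe_decompose_projOfCompl {ι : Type*} [DecidableEq ι] [AddMonoid ι]
    {𝒜 : ι → AddSubgroup R} [GradedRing 𝒜] (hB : ∀ b ∈ B, ∀ i, (decompose 𝒜 b i : R) ∈ B)
    (hK : K.IsHomogeneous 𝒜) (r : R) (i : ι) :
    (decompose 𝒜 (projOfCompl hdisj hsup r : R) i : R) =
      projOfCompl hdisj hsup (decompose 𝒜 r i : R) := by
  set p := projOfCompl hdisj hsup
  have hsplit : (decompose 𝒜 r i : R) =
      decompose 𝒜 (r - p r : R) i + decompose 𝒜 (p r : R) i := by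
    rw [← AddSubgroup.coe_add, ← DirectSum.add_apply, ← decompose_add, sub_add_cancel]
  rw [hsplit, map_add,
    projOfCompl_eq_zero_of_mem hdisj hsup (hK i (sub_projOfCompl_mem hdisj hsup r)), zero_add,
    projOfCompl_of_mem hdisj hsup (hB _ (p r).2 i)]

end Subring

section DegreeLE

variable {R ι : Type*} [CommRing R] [DecidableEq ι] [AddMonoid ι] [LT ι]
  (𝒜 : ι → AddSubgroup R) [GradedRing 𝒜]

def DegreeLE (n : ι) (x : R) : Prop :=
  ∀ m, n < m → ((decompose 𝒜 x m : 𝒜 m) : R) = 0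

variable {𝒜} {n : ι}

theorem DegreeLE.sub {x y : R} (hx : DegreeLE 𝒜 n x) (hy : DegreeLE 𝒜 n y) :
    DegreeLE 𝒜 n (x - y) := fun m hm ↦ by
  simp [decompose_sub, hx m hm, hy m hm]

variable {B : Subring R} {K : Ideal R} (hdisj : Disjoint K.toAddSubgroup B.toAddSubgroup)
  (hsup : ∀ r, ∃ x ∈ K, ∃ y ∈ B, r = x + y)

theorem DegreeLE.projOfCompl (hB : ∀ b ∈ B, ∀ i, (decompose 𝒜 b i : R) ∈ B)
    (hK : K.IsHomogeneous 𝒜) {x : R} (hx : DegreeLE 𝒜 n x) :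
    DegreeLE 𝒜 n (Subring.projOfCompl hdisj hsup x : R) := fun m hm ↦ by
  rw [Subring.coe_decompose_projOfCompl hdisj hsup hB hK, hx m hm, map_zero,
    ZeroMemClass.coe_zero]

theorem Subring.projOfCompl_mem_closure_degreeLE
    (hB : ∀ b ∈ B, ∀ i, (decompose 𝒜 b i : R) ∈ B) (hK : K.IsHomogeneous 𝒜) {x : R}
    (hx : x ∈ closure {x | DegreeLE 𝒜 n x}) :
    (projOfCompl hdisj hsup x : R) ∈ closure {x | x ∈ B ∧ DegreeLE 𝒜 n x} := by
  let π := B.subtype.comp (projOfCompl hdisj hsup)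
  suffices closure {x | DegreeLE 𝒜 n x} ≤ (closure {x | x ∈ B ∧ DegreeLE 𝒜 n x}).comap π from
    this hx
  exact closure_le.mpr fun g hg ↦
    subset_closure ⟨(projOfCompl hdisj hsup g).2, hg.projOfCompl hdisj hsup hB hK⟩

end DegreeLE

/-- Let `S` be a `ℤ`-graded commutative ring, `S̄ ⊆ S` a graded subring
(`Sb` below) and `K ⊆ S` a homogeneous ideal with `S = K ⊕ S̄` as graded abelian groups.
Let `J ⊆ S` be a homogeneous ideal containing `K` (so `J = K ⊕ J̄` with `J̄ = J ∩ S̄`).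
Fix `n : ℤ`; let `S′` be the subring of `S` generated by the elements of degree `≤ n`
(i.e. those all of whose homogeneous components of degree `> n` vanish), `J′ ⊆ S′` the
ideal generated by the elements of `J` of degree `≤ n`, and define `S̄′ ⊆ S̄`, `J̄′ ⊆ S̄′`
analogously.  Then the natural ring map `S′/J′ → S̄′/J̄′` (induced by the projection
`S = K ⊕ S̄ → S̄`) is an isomorphism; equivalently — as formalized here — there is a ring
isomorphism `e : S′/J′ ≃ S̄′/J̄′` whose inverse is induced by the inclusion `S̄′ ⊆ S′`. -/
theorem stmt3 {S : Type*} [CommRing S] (𝒜 : ℤ → AddSubgroup S) [GradedRing 𝒜]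
    (Sb : Subring S)
    (hSbGraded : ∀ x ∈ Sb, ∀ m : ℤ, ((DirectSum.decompose 𝒜 x m : 𝒜 m) : S) ∈ Sb)
    (K : Ideal S) (hKhom : Ideal.IsHomogeneous 𝒜 K)
    (hdisj : Disjoint (K.toAddSubgroup) Sb.toAddSubgroup)
    (hdecomp : ∀ s : S, ∃ x ∈ K, ∃ y ∈ Sb, s = x + y)
    (J : Ideal S) (hKJ : K ≤ J)
    (n : ℤ)
    (S' : Subring S)
    (hS' : S' = Subring.closure
      {x : S | ∀ m : ℤ, n < m → ((DirectSum.decompose 𝒜 x m : 𝒜 m) : S) = 0})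
    (Sb' : Subring S)
    (hSb' : Sb' = Subring.closure
      {x : S | x ∈ Sb ∧ ∀ m : ℤ, n < m → ((DirectSum.decompose 𝒜 x m : 𝒜 m) : S) = 0})
    (J' : Ideal S')
    (hJ' : J' = Ideal.span
      {x : S' | (x : S) ∈ J ∧ ∀ m : ℤ, n < m →
        ((DirectSum.decompose 𝒜 (x : S) m : 𝒜 m) : S) = 0})
    (Jb' : Ideal Sb')
    (hJb' : Jb' = Ideal.span
      {x : Sb' | (x : S) ∈ J ∧ ∀ m : ℤ, n < m →
        ((DirectSum.decompose 𝒜 (x : S) m : 𝒜 m) : S) = 0}) :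
    ∃ e : (S' ⧸ J') ≃+* (Sb' ⧸ Jb'),
      ∀ x : Sb',
        e (Ideal.Quotient.mk J' (Subring.inclusion
            (by rw [hS', hSb']; exact Subring.closure_mono fun y hy => hy.2) x)) =
          Ideal.Quotient.mk Jb' x := by
  set π := Subring.projOfCompl hdisj hdecomp
  have hle : Sb' ≤ S' := by rw [hS', hSb']; exact Subring.closure_mono fun y hy ↦ hy.2
  have hSb'_le : Sb' ≤ Sb := by rw [hSb']; exact Subring.closure_le.mpr fun _ hx ↦ hx.1
  have hS'_top : Subring.closure (((↑) : S' → S) ⁻¹' {x | DegreeLE 𝒜 n x}) = ⊤ := by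
    subst hS'; exact Subring.closure_closure_coe_preimage
  let ι := Subring.inclusion hle
  let ρ : S' →+* Sb' := (Sb.subtype.comp π).restrict _ _ fun x hx ↦ by
    rw [hS'] at hx; rw [hSb']
    exact Subring.projOfCompl_mem_closure_degreeLE hdisj hdecomp hSbGraded hKhom hx
  have hρι : Function.LeftInverse ρ ι := fun b ↦ Subtype.ext <| by
    show (π b : S) = b
    rw [Subring.projOfCompl_of_mem hdisj hdecomp (hSb'_le b.2)]
  have hι : Jb' ≤ J'.comap ι := by
    rw [hJ', hJb']; exact Ideal.span_le.mpr fun w hw ↦ Ideal.subset_span hw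
  have hρ : J' ≤ Jb'.comap ρ := by
    rw [hJ', hJb']
    exact Ideal.span_le.mpr fun z hz ↦ Ideal.subset_span
      ⟨Subring.coe_projOfCompl_mem hdisj hdecomp hKJ hz.1,
        DegreeLE.projOfCompl hdisj hdecomp hSbGraded hKhom hz.2⟩
  have hker : ∀ a, a - ι (ρ a) ∈ J' := by
    rw [hJ']
    refine Ideal.forall_sub_map_mem_of_closure_eq_top hS'_top (ι.comp ρ) _ fun g hg ↦ ?_
    exact Ideal.subset_span ⟨hKJ (Subring.sub_projOfCompl_mem hdisj hdecomp g),
      DegreeLE.sub hg (DegreeLE.projOfCompl hdisj hdecomp hSbGraded hKhom hg)⟩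
  exact ⟨Ideal.quotientEquivOfLeftInverse hρι hι hρ hker, fun x ↦
    (Ideal.quotientEquivOfLeftInverse_mk hρι hι hρ hker _).trans (congrArg _ (hρι x))⟩
end

section
/- Let R be a commutative ring in which 2 is invertible, and let B be the commutative R-algebra generated by f_1,…,f_g, h_1,…,h_g subject to relations of the form (for all i ≠ j): f_i f_j, f_i h_j, h_i h_j lie in the R-span of {1, f_1,…,f_g, h_1,…,h_g, f_i^2, f_j^2}, and h_i^2 − f_i^3 lies in the R-span of {1, f_1,…,f_g, h_1,…,h_g}. Assume the monomials {1} ∪ {f_i^n : n ≥ 1} ∪ {f_i^n h_i : n ≥ 0} form an R-basis of B. Define the R-submodules F̄_n B = R·1 + ∑_{2 ≤ m ≤ n, 1 ≤ i ≤ g} R·b_i[m], where b_i[2k] = f_i^k and b_i[2k+1] = f_i^{k-1} h_i. Then (F̄_n B) is an algebra filtration: F̄_n B · F̄_{n'} B ⊆ F̄_{n+n'} B for all n, n' ≥ 0. -/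
/-!
Let `F̄ₙ` be spanned by `1`, the `fᵢᵖ` with `2p ≤ n` and the `fᵢᵖhᵢ` with `2p + 3 ≤ n`. Then
`F̄₃ = ⟨1, fᵢ, hᵢ⟩` and `F̄₄ = ⟨1, fᵢ, hᵢ, fᵢ²⟩`, so the defining relations say that `fᵢfⱼ ∈ F̄₃`,
`fᵢhⱼ, hᵢhⱼ ∈ F̄₄` for `i ≠ j` and `hᵢ² - fᵢ³ ∈ F̄₄`. It suffices that multiplication by `fⱼ`
raises the filtration degree by at most 2 and multiplication by `hⱼ` by at most 3. On a spanning
monomial `fₖᵖ` or `fₖᵖhₖ` with `k ≠ j`, one relation rewrites the product as an element of `F̄₃`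
or `F̄₄` times a power of `fₖ` of lower degree, a product controlled by the induction hypothesis.
So both claims follow by strong induction on `n`, the one for `fⱼ` at level `n` being needed for
the one for `hⱼ` at level `n`.
-/

open Submodule

section

variable (R : Type*) {B ι : Type*} [CommSemiring R] [CommRing B] [Algebra R B] (f h : ι → B)

-- `fᵢᵖ` is the paper's `bᵢ[2p]` and `fᵢᵖhᵢ` is `bᵢ[2p+3]`.
def monomialFiltration (n : ℕ) : Submodule R B :=
  span R ({1} ∪ {x | ∃ i p, 2 * p ≤ n ∧ x = f i ^ p} ∪
    {x | ∃ i p, 2 * p + 3 ≤ n ∧ x = f i ^ p * h i})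

local notation "𝓕" => monomialFiltration R f h

def MulRaisesBy (y : B) (k n : ℕ) : Prop := ∀ x ∈ 𝓕 n, y * x ∈ 𝓕 (n + k)

variable {R f h}

theorem monomialFiltration_le {n : ℕ} {N : Submodule R B} (h1 : (1 : B) ∈ N)
    (hf : ∀ i p, 2 * p ≤ n → f i ^ p ∈ N) (hh : ∀ i p, 2 * p + 3 ≤ n → f i ^ p * h i ∈ N) :
    𝓕 n ≤ N :=
  span_le.2 <| by
    rintro _ ((rfl | ⟨i, p, hp, rfl⟩) | ⟨i, p, hp, rfl⟩)
    exacts [h1, hf i p hp, hh i p hp]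

theorem one_mem_monomialFiltration (n : ℕ) : (1 : B) ∈ 𝓕 n :=
  subset_span (.inl (.inl rfl))

theorem pow_mem_monomialFiltration {n p : ℕ} (i : ι) (hp : 2 * p ≤ n) : f i ^ p ∈ 𝓕 n :=
  subset_span (.inl (.inr ⟨i, p, hp, rfl⟩))

theorem pow_mul_mem_monomialFiltration {n p : ℕ} (i : ι) (hp : 2 * p + 3 ≤ n) :
    f i ^ p * h i ∈ 𝓕 n :=
  subset_span (.inr ⟨i, p, hp, rfl⟩)

theorem monomialFiltration_mono {m n : ℕ} (hmn : m ≤ n) : 𝓕 m ≤ 𝓕 n :=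
  monomialFiltration_le (one_mem_monomialFiltration n)
    (fun i _ hp => pow_mem_monomialFiltration i (hp.trans hmn))
    (fun i _ hp => pow_mul_mem_monomialFiltration i (hp.trans hmn))

theorem f_apply_mem_monomialFiltration {n : ℕ} (i : ι) (hn : 2 ≤ n) : f i ∈ 𝓕 n := by
  simpa using pow_mem_monomialFiltration (h := h) (p := 1) i hn

theorem h_apply_mem_monomialFiltration {n : ℕ} (i : ι) (hn : 3 ≤ n) : h i ∈ 𝓕 n := by
  simpa using pow_mul_mem_monomialFiltration (f := f) (p := 0) i hn

theorem mul_mem_of_forall_generators {n : ℕ} {N : Submodule R B} {y : B} (h1 : y ∈ N)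
    (hf : ∀ i p, 2 * p ≤ n → y * f i ^ p ∈ N)
    (hh : ∀ i p, 2 * p + 3 ≤ n → y * (f i ^ p * h i) ∈ N) {x : B} (hx : x ∈ 𝓕 n) :
    y * x ∈ N :=
  monomialFiltration_le (N := N.comap (LinearMap.mulLeft R y)) (by simpa using h1) hf hh hx

theorem pow_mul_mem_of_mulRaisesBy {j : ι} {m N p : ℕ}
    (hf : ∀ n, m ≤ n → n + 2 ≤ N → MulRaisesBy R f h (f j) 2 n) (hp : m + 2 * p ≤ N) {y : B}
    (hy : y ∈ 𝓕 m) : f j ^ p * y ∈ 𝓕 (m + 2 * p) := by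
  induction p with
  | zero => simpa using hy
  | succ p ih =>
    rw [pow_succ', mul_assoc, show m + 2 * (p + 1) = m + 2 * p + 2 by ring]
    exact hf _ (by omega) (by omega) _ (ih (by omega))

theorem mul_mem_of_mulRaisesBy {m m' : ℕ}
    (hf : ∀ j n, m' ≤ n → n + 2 ≤ m + m' → MulRaisesBy R f h (f j) 2 n)
    (hh : ∀ j n, m' ≤ n → n + 3 ≤ m + m' → MulRaisesBy R f h (h j) 3 n)
    {x y : B} (hx : x ∈ 𝓕 m) (hy : y ∈ 𝓕 m') : x * y ∈ 𝓕 (m + m') := by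
  rw [mul_comm]
  refine mul_mem_of_forall_generators (monomialFiltration_mono (by omega) hy)
    (fun i p hp => ?_) (fun i p hp => ?_) hx
  · rw [mul_comm]
    exact monomialFiltration_mono (by omega) (pow_mul_mem_of_mulRaisesBy (hf i) (by omega) hy)
  · have hhy := hh i m' le_rfl (by omega) y hy
    rw [mul_left_comm, mul_comm y]
    exact monomialFiltration_mono (m := m' + 3 + 2 * p) (by omega)
      (pow_mul_mem_of_mulRaisesBy (N := m + m') (p := p) (fun n hn => hf i n (by omega))
        (by omega) hhy)

theorem mulRaisesBy_f_of_lt (hff : ∀ i j, i ≠ j → f i * f j ∈ 𝓕 3)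
    (hfh : ∀ i j, i ≠ j → f i * h j ∈ 𝓕 4) {n : ℕ}
    (hP : ∀ j k, k < n → MulRaisesBy R f h (f j) 2 k)
    (hQ : ∀ j k, k < n → MulRaisesBy R f h (h j) 3 k) (j : ι) :
    MulRaisesBy R f h (f j) 2 n := by
  have hmul : ∀ {m k : ℕ} {x y : B}, m + k ≤ n + 1 → x ∈ 𝓕 m → y ∈ 𝓕 k → x * y ∈ 𝓕 (m + k) :=
    fun hle => mul_mem_of_mulRaisesBy (fun j n' _ hn' => hP j n' (by omega))
      (fun j n' _ hn' => hQ j n' (by omega))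
  intro x hx
  refine mul_mem_of_forall_generators (f_apply_mem_monomialFiltration j (by omega))
    (fun k p hp => ?_) (fun k p hp => ?_) hx
  · rcases eq_or_ne k j with rfl | hkj
    · rw [← pow_succ']
      exact pow_mem_monomialFiltration k (by omega)
    cases p with
    | zero => simpa using f_apply_mem_monomialFiltration j (by omega)
    | succ p =>
      rw [pow_succ', ← mul_assoc]
      exact monomialFiltration_mono (by omega)
        (hmul (by omega) (hff j k hkj.symm) (pow_mem_monomialFiltration k le_rfl))
  · rcases eq_or_ne k j with rfl | hkj
    · rw [← mul_assoc, ← pow_succ']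
      exact pow_mul_mem_monomialFiltration k (by omega)
    rw [mul_left_comm, mul_comm]
    exact monomialFiltration_mono (by omega)
      (hmul (by omega) (hfh j k hkj.symm) (pow_mem_monomialFiltration k le_rfl))

theorem mulRaisesBy_h_of_lt (hfh : ∀ i j, i ≠ j → f i * h j ∈ 𝓕 4)
    (hhh : ∀ i j, i ≠ j → h i * h j ∈ 𝓕 4) (hh2 : ∀ i, h i ^ 2 - f i ^ 3 ∈ 𝓕 4) {n : ℕ}
    (hP : ∀ j k, k ≤ n → MulRaisesBy R f h (f j) 2 k)
    (hQ : ∀ j k, k < n → MulRaisesBy R f h (h j) 3 k) (j : ι) :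
    MulRaisesBy R f h (h j) 3 n := by
  have hmul : ∀ {m k : ℕ} {x y : B}, m + k ≤ n + 2 → x ∈ 𝓕 m → y ∈ 𝓕 k → x * y ∈ 𝓕 (m + k) :=
    fun hle => mul_mem_of_mulRaisesBy (fun j n' _ hn' => hP j n' (by omega))
      (fun j n' _ hn' => hQ j n' (by omega))
  intro x hx
  refine mul_mem_of_forall_generators (h_apply_mem_monomialFiltration j (by omega))
    (fun k p hp => ?_) (fun k p hp => ?_) hx
  · rcases eq_or_ne k j with rfl | hkj
    · rw [mul_comm]
      exact pow_mul_mem_monomialFiltration k (by omega)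
    cases p with
    | zero => simpa using h_apply_mem_monomialFiltration j (by omega)
    | succ p =>
      rw [pow_succ', ← mul_assoc, mul_comm (h j)]
      exact monomialFiltration_mono (by omega)
        (hmul (by omega) (hfh k j hkj) (pow_mem_monomialFiltration k le_rfl))
  · rcases eq_or_ne k j with rfl | hkj
    · rw [show h k * (f k ^ p * h k) = f k ^ (p + 3) + (h k ^ 2 - f k ^ 3) * f k ^ p by ring]
      exact add_mem (pow_mem_monomialFiltration k (by omega)) (monomialFiltration_mono (by omega)
        (hmul (by omega) (hh2 k) (pow_mem_monomialFiltration k le_rfl)))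
    rw [mul_left_comm, mul_comm]
    exact monomialFiltration_mono (by omega)
      (hmul (by omega) (hhh j k hkj.symm) (pow_mem_monomialFiltration k le_rfl))

theorem mulRaisesBy_of_relations (hff : ∀ i j, i ≠ j → f i * f j ∈ 𝓕 3)
    (hfh : ∀ i j, i ≠ j → f i * h j ∈ 𝓕 4) (hhh : ∀ i j, i ≠ j → h i * h j ∈ 𝓕 4)
    (hh2 : ∀ i, h i ^ 2 - f i ^ 3 ∈ 𝓕 4) (n : ℕ) :
    (∀ j, MulRaisesBy R f h (f j) 2 n) ∧ ∀ j, MulRaisesBy R f h (h j) 3 n := by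
  induction n using Nat.strong_induction_on with
  | _ n ih =>
    have hP := mulRaisesBy_f_of_lt hff hfh (fun j k hk => (ih k hk).1 j)
      (fun j k hk => (ih k hk).2 j)
    refine ⟨hP, mulRaisesBy_h_of_lt hfh hhh hh2 (fun j k hk => ?_)
      (fun j k hk => (ih k hk).2 j)⟩
    rcases hk.lt_or_eq with hk | rfl
    exacts [(ih k hk).1 j, hP j]

theorem monomialFiltration_mul_le (hff : ∀ i j, i ≠ j → f i * f j ∈ 𝓕 3)
    (hfh : ∀ i j, i ≠ j → f i * h j ∈ 𝓕 4) (hhh : ∀ i j, i ≠ j → h i * h j ∈ 𝓕 4)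
    (hh2 : ∀ i, h i ^ 2 - f i ^ 3 ∈ 𝓕 4) (m m' : ℕ) : 𝓕 m * 𝓕 m' ≤ 𝓕 (m + m') :=
  have hgen := mulRaisesBy_of_relations hff hfh hhh hh2
  mul_le.2 fun _ hx _ hy =>
    mul_mem_of_mulRaisesBy (fun j n _ _ => (hgen n).1 j) (fun j n _ _ => (hgen n).2 j) hx hy

theorem span_basis_eq_monomialFiltration {bb : ι → ℕ → B}
    (hbb : ∀ i m, bb i m = if m % 2 = 0 then f i ^ (m / 2) else f i ^ ((m - 3) / 2) * h i)
    (n : ℕ) : span R ({1} ∪ {y | ∃ i m, 2 ≤ m ∧ m ≤ n ∧ y = bb i m}) = 𝓕 n := by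
  refine le_antisymm (span_le.2 ?_)
    (monomialFiltration_le (subset_span (.inl rfl)) (fun i p hp => ?_) fun i p hp => ?_)
  · rintro _ (rfl | ⟨i, m, h2m, hmn, rfl⟩)
    · exact one_mem_monomialFiltration n
    rw [hbb]
    split_ifs with hm
    · exact pow_mem_monomialFiltration i (by omega)
    · exact pow_mul_mem_monomialFiltration i (by omega)
  · rcases p.eq_zero_or_pos with rfl | hp0
    · simpa using subset_span (.inl rfl)
    refine subset_span (.inr ⟨i, 2 * p, by omega, hp, ?_⟩)
    rw [hbb, if_pos (by omega), Nat.mul_div_cancel_left p two_pos]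
  · refine subset_span (.inr ⟨i, 2 * p + 3, by omega, hp, ?_⟩)
    rw [hbb, if_neg (by omega), show (2 * p + 3 - 3) / 2 = p by omega]

end

open Finset in
theorem stmt6_general {R B : Type*} [CommRing R]
    [CommRing B] [Algebra R B] (g : ℕ)
    (f h : Fin g → B)
    (α γ a : Fin g → Fin g → R) (c : Fin g → Fin g → Fin g → R)
    (d t v r δ b : Fin g → Fin g → R) (e : Fin g → Fin g → Fin g → R)
    (β ε ψ u : Fin g → Fin g → R) (l : Fin g → Fin g → Fin g → R)
    (gc kc : Fin g → Fin g → R) (π s : Fin g → R)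
    -- relation (main-eq-ff)
    (hff : ∀ i j, i ≠ j → f i * f j =
      algebraMap R B (α j i) * h i + algebraMap R B (α i j) * h j +
      algebraMap R B (γ j i) * f i + algebraMap R B (γ i j) * f j +
      (∑ kk ∈ univ.filter (fun kk => kk ≠ i ∧ kk ≠ j), algebraMap R B (c i j kk) * f kk) +
      algebraMap R B (a i j))
    -- relation (main-eq-fh)
    (hfh : ∀ i j, i ≠ j → f i * h j =
      algebraMap R B (d i j) * f j ^ 2 + algebraMap R B (t j i) * h i +
      algebraMap R B (v i j) * h j + algebraMap R B (r j i) * f i +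
      algebraMap R B (δ i j) * f j +
      (∑ kk ∈ univ.filter (fun kk => kk ≠ i ∧ kk ≠ j), algebraMap R B (e i j kk) * f kk) +
      algebraMap R B (b i j))
    -- relation (main-eq-hh)
    (hhh : ∀ i j, i ≠ j → h i * h j =
      algebraMap R B (β j i) * f i ^ 2 + algebraMap R B (β i j) * f j ^ 2 +
      algebraMap R B (ε j i) * h i + algebraMap R B (ε i j) * h j +
      algebraMap R B (ψ j i) * f i + algebraMap R B (ψ i j) * f j +
      (∑ kk ∈ univ.filter (fun kk => kk ≠ i ∧ kk ≠ j), algebraMap R B (l i j kk) * f kk) +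
      algebraMap R B (u i j))
    -- relation (main-eq-h2f3)
    (hh2 : ∀ i, h i ^ 2 = f i ^ 3 +
      (∑ j ∈ univ.filter (fun j => j ≠ i), algebraMap R B (gc i j) * h j) +
      algebraMap R B (π i) * f i +
      (∑ j ∈ univ.filter (fun j => j ≠ i), algebraMap R B (kc i j) * f j) +
      algebraMap R B (s i))
    -- the elements bᵢ[m], m ≥ 2
    (bb : Fin g → ℕ → B)
    (hbb : ∀ i m, bb i m = if m % 2 = 0 then f i ^ (m / 2) else f i ^ ((m - 3) / 2) * h i)
    -- the filtration
    (Fb : ℕ → Submodule R B)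
    (hFb : ∀ m, Fb m =
      Submodule.span R ({1} ∪ {y : B | ∃ i mm, 2 ≤ mm ∧ mm ≤ m ∧ y = bb i mm})) :
    ∀ m m' : ℕ, Fb m * Fb m' ≤ Fb (m + m') := by
  intro m m'
  simp only [hFb, span_basis_eq_monomialFiltration hbb]
  refine monomialFiltration_mul_le (fun i j hij => ?_) (fun i j hij => ?_) (fun i j hij => ?_)
    (fun i => ?_) m m'
  all_goals
    first
    | rw [hff i j hij] | rw [hfh i j hij] | rw [hhh i j hij]
    | rw [hh2 i, add_assoc, add_assoc, add_assoc, add_sub_cancel_left]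
    simp only [Algebra.algebraMap_eq_smul_one, smul_one_mul]
    repeat' first
      | refine add_mem ?_ ?_
      | refine Submodule.sum_mem _ fun _ _ => ?_
      | refine Submodule.smul_mem _ _ ?_
    all_goals first
      | exact one_mem_monomialFiltration _
      | exact f_apply_mem_monomialFiltration _ (by norm_num)
      | exact h_apply_mem_monomialFiltration _ (by norm_num)
      | exact pow_mem_monomialFiltration _ (by norm_num)

open Finset in
/-- Lemma 1.8(ii) of the paper.  Let `R` be a commutative ring in which
`2` is invertible, and let `B` be the commutative `R`-algebra generated by
`f₁,…,f_g, h₁,…,h_g` subject to relations of the form (main-eq-ff)–(main-eq-h2f3): for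
`i ≠ j`, `fᵢfⱼ`, `fᵢhⱼ`, `hᵢhⱼ` lie in the `R`-span of `{1, f₁,…,f_g, h₁,…,h_g, fᵢ², fⱼ²}`
with the prescribed shape, and `hᵢ² − fᵢ³` lies in the `R`-span of
`{1, f₁,…,f_g, h₁,…,h_g}`.  Assume the monomials `{1} ∪ {fᵢⁿ : n ≥ 1} ∪ {fᵢⁿhᵢ : n ≥ 0}`
(equivalently `{1} ∪ {bᵢ[m] : m ≥ 2}` where `bᵢ[2k] = fᵢᵏ`, `bᵢ[2k+1] = fᵢ^{k−1}hᵢ`)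
form an `R`-basis of `B`.  Then the `R`-submodules
`F̄_n B = R·1 + ∑_{2 ≤ m ≤ n, i} R·bᵢ[m]` form an algebra filtration:
`F̄_n B · F̄_{n'} B ⊆ F̄_{n+n'} B` for all `n, n' ≥ 0`. -/
theorem stmt6 {R B : Type*} [CommRing R] (h2 : Invertible (2 : R))
    [CommRing B] [Algebra R B] (g : ℕ)
    (f h : Fin g → B)
    (α γ a : Fin g → Fin g → R) (c : Fin g → Fin g → Fin g → R)
    (d t v r δ b : Fin g → Fin g → R) (e : Fin g → Fin g → Fin g → R)
    (β ε ψ u : Fin g → Fin g → R) (l : Fin g → Fin g → Fin g → R)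
    (gc kc : Fin g → Fin g → R) (π s : Fin g → R)
    -- relation (main-eq-ff)
    (hff : ∀ i j, i ≠ j → f i * f j =
      algebraMap R B (α j i) * h i + algebraMap R B (α i j) * h j +
      algebraMap R B (γ j i) * f i + algebraMap R B (γ i j) * f j +
      (∑ kk ∈ univ.filter (fun kk => kk ≠ i ∧ kk ≠ j), algebraMap R B (c i j kk) * f kk) +
      algebraMap R B (a i j))
    -- relation (main-eq-fh)
    (hfh : ∀ i j, i ≠ j → f i * h j =
      algebraMap R B (d i j) * f j ^ 2 + algebraMap R B (t j i) * h i +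
      algebraMap R B (v i j) * h j + algebraMap R B (r j i) * f i +
      algebraMap R B (δ i j) * f j +
      (∑ kk ∈ univ.filter (fun kk => kk ≠ i ∧ kk ≠ j), algebraMap R B (e i j kk) * f kk) +
      algebraMap R B (b i j))
    -- relation (main-eq-hh)
    (hhh : ∀ i j, i ≠ j → h i * h j =
      algebraMap R B (β j i) * f i ^ 2 + algebraMap R B (β i j) * f j ^ 2 +
      algebraMap R B (ε j i) * h i + algebraMap R B (ε i j) * h j +
      algebraMap R B (ψ j i) * f i + algebraMap R B (ψ i j) * f j +
      (∑ kk ∈ univ.filter (fun kk => kk ≠ i ∧ kk ≠ j), algebraMap R B (l i j kk) * f kk) +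
      algebraMap R B (u i j))
    -- relation (main-eq-h2f3)
    (hh2 : ∀ i, h i ^ 2 = f i ^ 3 +
      (∑ j ∈ univ.filter (fun j => j ≠ i), algebraMap R B (gc i j) * h j) +
      algebraMap R B (π i) * f i +
      (∑ j ∈ univ.filter (fun j => j ≠ i), algebraMap R B (kc i j) * f j) +
      algebraMap R B (s i))
    -- the elements bᵢ[m], m ≥ 2
    (bb : Fin g → ℕ → B)
    (hbb : ∀ i m, bb i m = if m % 2 = 0 then f i ^ (m / 2) else f i ^ ((m - 3) / 2) * h i)
    -- `{1} ∪ {bᵢ[m] : m ≥ 2}` is an `R`-basis of `B`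
    (hindep : LinearIndependent R
      (fun p : Option (Fin g × {m : ℕ // 2 ≤ m}) => p.elim 1 fun q => bb q.1 q.2))
    (hspan : Submodule.span R (Set.range
      (fun p : Option (Fin g × {m : ℕ // 2 ≤ m}) => p.elim 1 fun q => bb q.1 q.2)) = ⊤)
    -- the filtration
    (Fb : ℕ → Submodule R B)
    (hFb : ∀ m, Fb m =
      Submodule.span R ({1} ∪ {y : B | ∃ i mm, 2 ≤ mm ∧ mm ≤ m ∧ y = bb i mm})) :
    ∀ m m' : ℕ, Fb m * Fb m' ≤ Fb (m + m') :=
  stmt6_general g f h α γ a c d t v r δ b e β ε ψ u l gc kc π s hff hfh hhh hh2 bb hbb Fb hFb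
end

section
/- Let A be a marked algebra of genus g over a commutative ring R in which 6 is invertible. Then there exist unique elements f_i ∈ F_{D+p_i}A and h_i ∈ F_{D+2p_i}A (for i = 1,…,g) such that f_i ≡ e_i t^2 mod F_D A, h_i ≡ e_i t^3 mod F_{2D} A, h_i^2 − f_i^3 ∈ F_{3D}A, and f_i h_i^2 − f_i^4 ∈ F_{4D}A. -/
/-- A *marked algebra of genus `g`* over `R` (Definition 1.3 of the paper).  `A` is a
commutative `R`-algebra with an exhaustive `S_g`-valued algebra filtration
`F : (ℤ_{>0})^g → Submodule R A`, `ν ↦ F_{ν₁p₁ + ⋯ + ν_g p_g}A`, which is a morphism of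
lattices, together with a marking: an isomorphism of graded `R`-algebras
`gr^•_{F̄} A ≅ C_{R,g}` (where `F̄_n A = F_{nD}A` for `n ≥ 1`, `F̄₀A = R`, and `C_{R,g}`
is the subring of `(R^g)[t]` of polynomials with no linear term and constant term in
`R`), compatible with the refined filtration.  The marking is encoded by: `F_D A = R·1`
(the degree-one part of `C_{R,g}` vanishes), and for `n ≥ 2` surjective linear maps
`φ n : F_{nD}A → R^g` with kernel `F_{(n-1)D}A` — realizing
`F_{nD}A/F_{(n-1)D}A ≅ ⊕ᵢ R·eᵢtⁿ` — multiplicative (componentwise) on products, such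
that the image of `F_{nD+pᵢ}A/F_{nD}A ↪ F_{(n+1)D}A/F_{nD}A` is exactly `R·eᵢt^{n+1}`. -/
structure MarkedAlgebra (R : Type*) [CommRing R] (g : ℕ) (A : Type*) [CommRing A]
    [Algebra R A] where
  F : (Fin g → ℕ+) → Submodule R A
  φ : (n : ℕ+) → (F (fun _ => n) →ₗ[R] (Fin g → R))
  inf_eq : ∀ ν ν', F (ν ⊓ ν') = F ν ⊓ F ν'
  sup_eq : ∀ ν ν', F (ν ⊔ ν') = F ν ⊔ F ν'
  exhaustive : (⨆ ν, F ν) = ⊤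
  mul_mem : ∀ (ν ν' : Fin g → ℕ+) (x y : A),
    x ∈ F ν → y ∈ F ν' → x * y ∈ F (ν + ν')
  F_D : F (fun _ => 1) = Submodule.span R {1}
  φ_surjective : ∀ n : ℕ+, 2 ≤ n → Function.Surjective (φ n)
  φ_ker : ∀ (n : ℕ+), 2 ≤ n → ∀ x : F (fun _ => n),
    (φ n x = 0 ↔ (x : A) ∈ F (fun _ => n - 1))
  φ_mul : ∀ (n m : ℕ+), 2 ≤ n → 2 ≤ m → ∀ (x : F (fun _ => n)) (y : F (fun _ => m))
    (hxy : (x : A) * (y : A) ∈ F (fun _ => n + m)),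
    φ (n + m) ⟨(x : A) * (y : A), hxy⟩ = fun i => φ n x i * φ m y i
  marked_le : ∀ (n : ℕ+) (i : Fin g) (x : A),
    x ∈ F (fun j => if j = i then n + 1 else n) → ∀ (hx : x ∈ F (fun _ => n + 1)),
    ∀ j : Fin g, j ≠ i → φ (n + 1) ⟨x, hx⟩ j = 0
  marked_ge : ∀ (n : ℕ+) (i : Fin g) (r : R), ∃ x : A,
    x ∈ F (fun j => if j = i then n + 1 else n) ∧ ∃ hx : x ∈ F (fun _ => n + 1),
    φ (n + 1) ⟨x, hx⟩ = Pi.single i r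

/-!
Fix `i` and start from any lifts `f` of `eᵢt²` and `h` of `eᵢt³` with poles only at `pᵢ`.
Then `h² - f³` lies in `F_{3D + 3pᵢ}A`, and its `F̄₆` symbol vanishes. The substitutions
`h ↦ h + βf`, `f ↦ f + α`, `h ↦ h + γ` change the `pᵢ`-coefficient of its symbol in degree
`5`, `4`, `3` by `2β`, `-3α`, `2γ` (plus terms of lower degree), and since `6` is a unit these
coefficients can be killed one after the other. The last condition `f(h² - f³) ∈ F_{4D}A` says
exactly that the degree-`3` coefficient at `pᵢ` vanishes. Any two solutions differ by such a
substitution, and comparing the same three coefficients forces `α = β = γ = 0`.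
-/

namespace MarkedAlgebra

variable {R A : Type*} [CommRing R] [CommRing A] [Algebra R A] {g : ℕ} (M : MarkedAlgebra R g A)

abbrev Fbar (n : ℕ+) : Submodule R A := M.F fun _ => n

/-- `F_{bD + (a - b)pᵢ} A`. -/
abbrev Fat (i : Fin g) (a b : ℕ+) : Submodule R A := M.F fun j => if j = i then a else b

section Filtration

variable {i : Fin g} {x y : A}

lemma F_mono {ν ν' : Fin g → ℕ+} (h : ν ≤ ν') : M.F ν ≤ M.F ν' := by
  have hsup := M.sup_eq ν ν'
  rw [sup_eq_right.mpr h] at hsup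
  rw [hsup]
  exact le_sup_left

lemma Fbar_mono {m n : ℕ+} (h : m ≤ n) : M.Fbar m ≤ M.Fbar n :=
  M.F_mono fun _ => h

lemma Fat_mono {a b a' b' : ℕ+} (ha : a ≤ a') (hb : b ≤ b') : M.Fat i a b ≤ M.Fat i a' b' :=
  M.F_mono fun j => by split_ifs <;> assumption

lemma Fat_le_Fbar {a b n : ℕ+} (ha : a ≤ n) (hb : b ≤ n) : M.Fat i a b ≤ M.Fbar n :=
  M.F_mono fun j => by split_ifs <;> assumption

lemma Fbar_le_Fat {a b n : ℕ+} (ha : n ≤ a) (hb : n ≤ b) : M.Fbar n ≤ M.Fat i a b :=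
  M.F_mono fun j => by split_ifs <;> assumption

lemma Fat_eq_sup {a b c : ℕ+} (hca : c ≤ a) (hcb : c ≤ b) :
    M.Fat i a b = M.Fat i a c ⊔ M.Fat i c b := by
  rw [Fat, ← M.sup_eq]
  congr 1
  funext j
  simp only [Pi.sup_apply]
  split_ifs <;> simp [hca, hcb]

lemma mem_Fat_inf {a b n a' : ℕ+} (ha' : a ⊓ n = a') (hb : b ≤ n) (hx : x ∈ M.Fat i a b)
    (hxn : x ∈ M.Fbar n) : x ∈ M.Fat i a' b := by
  have hinf : (fun j => if j = i then a else b) ⊓ (fun _ => n) =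
      fun j => if j = i then a' else b := by
    funext j
    simp only [Pi.inf_apply]
    split_ifs <;> simp [← ha', hb]
  rw [Fat, ← hinf, M.inf_eq]
  exact ⟨hx, hxn⟩

lemma mem_Fbar_one_iff : x ∈ M.Fbar 1 ↔ ∃ r : R, r • (1 : A) = x := by
  rw [Fbar, M.F_D, Submodule.mem_span_singleton]

lemma smul_one_mem_Fbar (r : R) (n : ℕ+) : r • (1 : A) ∈ M.Fbar n :=
  M.Fbar_mono one_le (M.mem_Fbar_one_iff.mpr ⟨r, rfl⟩)

lemma mul_mem_Fbar {m n k : ℕ+} (hk : m + n = k) (hx : x ∈ M.Fbar m) (hy : y ∈ M.Fbar n) :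
    x * y ∈ M.Fbar k :=
  hk ▸ M.mul_mem _ _ x y hx hy

lemma mul_mem_Fat {a b c d a' b' : ℕ+} (ha : a + c = a') (hb : b + d = b')
    (hx : x ∈ M.Fat i a b) (hy : y ∈ M.Fat i c d) : x * y ∈ M.Fat i a' b' := by
  have hadd : (fun j => if j = i then a else b) + (fun j => if j = i then c else d) =
      fun j => if j = i then a' else b' := by
    funext j
    split_ifs <;> simp [*]
  rw [Fat, ← hadd]
  exact M.mul_mem _ _ x y hx hy

end Filtration

open Classical in
/-- The class of `x` in `F̄ₙA / F̄ₙ₋₁A ≅ R^g`, extended by `0` outside `F̄ₙA`. -/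
noncomputable def symbol (n : ℕ+) (x : A) : Fin g → R :=
  if hx : x ∈ M.Fbar n then M.φ n ⟨x, hx⟩ else 0

section Symbol

variable {i : Fin g} {x y : A}

lemma symbol_of_mem {n : ℕ+} (hx : x ∈ M.Fbar n) : M.symbol n x = M.φ n ⟨x, hx⟩ :=
  dif_pos hx

lemma symbol_add {n : ℕ+} (hx : x ∈ M.Fbar n) (hy : y ∈ M.Fbar n) :
    M.symbol n (x + y) = M.symbol n x + M.symbol n y := by
  rw [M.symbol_of_mem hx, M.symbol_of_mem hy, M.symbol_of_mem (add_mem hx hy), ← map_add]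
  rfl

lemma symbol_sub {n : ℕ+} (hx : x ∈ M.Fbar n) (hy : y ∈ M.Fbar n) :
    M.symbol n (x - y) = M.symbol n x - M.symbol n y := by
  rw [M.symbol_of_mem hx, M.symbol_of_mem hy, M.symbol_of_mem (sub_mem hx hy), ← map_sub]
  rfl

lemma symbol_smul {n : ℕ+} (r : R) (hx : x ∈ M.Fbar n) :
    M.symbol n (r • x) = r • M.symbol n x := by
  rw [M.symbol_of_mem hx, M.symbol_of_mem (Submodule.smul_mem _ r hx), ← map_smul]
  rfl

lemma symbol_eq_zero_iff {m n : ℕ+} (hmn : m + 1 = n) (hx : x ∈ M.Fbar n) :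
    M.symbol n x = 0 ↔ x ∈ M.Fbar m := by
  subst hmn
  have two_le : 2 ≤ m + 1 := by
    rw [← PNat.coe_le_coe, PNat.add_coe]
    have := m.pos
    simp only [PNat.val_ofNat]
    omega
  rw [M.symbol_of_mem hx, M.φ_ker _ two_le, PNat.add_sub]

lemma symbol_eq_zero_of_mem {m n : ℕ+} (hmn : m < n) (hx : x ∈ M.Fbar m) :
    M.symbol n x = 0 := by
  have two_le : 2 ≤ n := by
    rw [← PNat.coe_lt_coe] at hmn
    rw [← PNat.coe_le_coe]
    have := m.pos
    simp only [PNat.val_ofNat]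
    omega
  rw [M.symbol_of_mem (M.Fbar_mono hmn.le hx), M.φ_ker n two_le]
  exact M.Fbar_mono (PNat.le_sub_one_of_lt hmn) hx

lemma symbol_mul {m n k : ℕ+} (hm : 2 ≤ m) (hn : 2 ≤ n) (hk : m + n = k) (hx : x ∈ M.Fbar m)
    (hy : y ∈ M.Fbar n) : M.symbol k (x * y) = M.symbol m x * M.symbol n y := by
  subst hk
  rw [M.symbol_of_mem hx, M.symbol_of_mem hy, M.symbol_of_mem (M.mul_mem_Fbar rfl hx hy)]
  exact M.φ_mul m n hm hn ⟨x, hx⟩ ⟨y, hy⟩ _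

lemma symbol_eq_single {m n : ℕ+} (hmn : m + 1 = n) (hx : x ∈ M.Fat i n m) :
    M.symbol n x = Pi.single i (M.symbol n x i) := by
  subst hmn
  have hxn : x ∈ M.Fbar (m + 1) := M.Fat_le_Fbar le_rfl (PNat.lt_add_right m 1).le hx
  funext j
  rcases eq_or_ne j i with rfl | hj
  · rw [Pi.single_eq_same]
  · rw [Pi.single_eq_of_ne hj, M.symbol_of_mem hxn]
    exact M.marked_le m i x hx hxn j hj

lemma exists_mem_Fat_symbol_eq_single {m n : ℕ+} (hmn : m + 1 = n) (i : Fin g) (r : R) :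
    ∃ x ∈ M.Fat i n m, M.symbol n x = Pi.single i r := by
  subst hmn
  obtain ⟨x, hx, hxn, hσ⟩ := M.marked_ge m i r
  exact ⟨x, hx, by rw [M.symbol_of_mem hxn, hσ]⟩

lemma sub_symbol_smul_mem {m n : ℕ+} (hmn : m + 1 = n) (hx : x ∈ M.Fat i n m)
    (hy : y ∈ M.Fbar n) (hσy : M.symbol n y = Pi.single i 1) :
    x - M.symbol n x i • y ∈ M.Fbar m := by
  have hxn : x ∈ M.Fbar n := M.Fat_le_Fbar le_rfl (hmn ▸ (PNat.lt_add_right m 1).le) hx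
  set c := M.symbol n x i
  have hσx : M.symbol n x = Pi.single i c := M.symbol_eq_single hmn hx
  have hsub := sub_mem hxn (Submodule.smul_mem _ c hy)
  rw [← M.symbol_eq_zero_iff hmn hsub, M.symbol_sub hxn (Submodule.smul_mem _ _ hy),
    M.symbol_smul _ hy, hσy, hσx, ← Pi.single_smul, smul_eq_mul, mul_one, sub_self]

lemma eq_zero_of_smul_add_mem {m n : ℕ+} (hmn : m + 1 = n) {r : R} {z : A} (hy : y ∈ M.Fbar n)
    (hσy : M.symbol n y = Pi.single i 1) (hz : z ∈ M.Fbar m) (h : r • y + z ∈ M.Fbar m) :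
    r = 0 := by
  have hry : r • y ∈ M.Fbar m := by simpa using sub_mem h hz
  have hσ := (M.symbol_eq_zero_iff hmn (Submodule.smul_mem _ r hy)).mpr hry
  rw [M.symbol_smul r hy, hσy] at hσ
  simpa using congrFun hσ i

lemma mul_mem_iff_symbol_apply_eq_zero {m n k l : ℕ+} (hm : 2 ≤ m) (hn : 2 ≤ n) (hk : m + n = k)
    (hl : l + 1 = k) (hx : x ∈ M.Fbar m) (hσx : M.symbol m x = Pi.single i 1)
    (hy : y ∈ M.Fbar n) : x * y ∈ M.Fbar l ↔ M.symbol n y i = 0 := by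
  rw [← M.symbol_eq_zero_iff hl (M.mul_mem_Fbar hk hx hy), M.symbol_mul hm hn hk hx hy, hσx,
    ← Pi.single_mul_left, one_mul, Pi.single_eq_zero_iff]

lemma exists_φ_eq_iff {n : ℕ+} (hx : x ∈ M.Fbar n) (v : Fin g → R) :
    (∃ hx' : x ∈ M.Fbar n, M.φ n ⟨x, hx'⟩ = v) ↔ M.symbol n x = v :=
  ⟨fun ⟨hx', e⟩ => (M.symbol_of_mem hx').trans e, fun e => ⟨hx, (M.symbol_of_mem hx).symm.trans e⟩⟩

end Symbol

/-- `f` and `h` lift `eᵢt²` and `eᵢt³` from the associated graded, with poles only at `pᵢ`. -/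
structure IsLiftPair (i : Fin g) (f h : A) : Prop where
  f_mem : f ∈ M.Fat i 2 1
  h_mem : h ∈ M.Fat i 3 1
  symbol_f : M.symbol 2 f = Pi.single i 1
  symbol_h : M.symbol 3 h = Pi.single i 1

lemma exists_isLiftPair (i : Fin g) : ∃ f h : A, M.IsLiftPair i f h := by
  obtain ⟨f, hf, hσf⟩ := M.exists_mem_Fat_symbol_eq_single (m := 1) rfl i 1
  obtain ⟨w, hw, hσw⟩ := M.exists_mem_Fat_symbol_eq_single (m := 2) (n := 3) rfl i 1
  rw [M.Fat_eq_sup (c := 1) (by decide) (by decide), Submodule.mem_sup] at hw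
  obtain ⟨h, hh, z, hz, rfl⟩ := hw
  have hz2 : z ∈ M.Fbar 2 := M.Fat_le_Fbar (by decide) le_rfl hz
  refine ⟨f, h, hf, hh, hσf, ?_⟩
  rwa [M.symbol_add (M.Fat_le_Fbar le_rfl (by decide) hh) (M.Fbar_mono (by decide) hz2),
    M.symbol_eq_zero_of_mem (by decide) hz2, add_zero] at hσw

namespace IsLiftPair

variable {M} {i : Fin g} {f h : A}

lemma f_mem_Fbar (H : M.IsLiftPair i f h) : f ∈ M.Fbar 2 :=
  M.Fat_le_Fbar le_rfl (by decide) H.f_mem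

lemma h_mem_Fbar (H : M.IsLiftPair i f h) : h ∈ M.Fbar 3 :=
  M.Fat_le_Fbar le_rfl (by decide) H.h_mem

lemma sq_mem_Fbar (H : M.IsLiftPair i f h) : f * f ∈ M.Fbar 4 :=
  M.mul_mem_Fbar rfl H.f_mem_Fbar H.f_mem_Fbar

lemma symbol_sq (H : M.IsLiftPair i f h) : M.symbol 4 (f * f) = Pi.single i 1 := by
  rw [M.symbol_mul (k := 4) le_rfl le_rfl rfl H.f_mem_Fbar H.f_mem_Fbar, H.symbol_f,
    ← Pi.single_mul, one_mul]

lemma mul_mem_Fbar (H : M.IsLiftPair i f h) : f * h ∈ M.Fbar 5 :=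
  M.mul_mem_Fbar rfl H.f_mem_Fbar H.h_mem_Fbar

lemma symbol_mul (H : M.IsLiftPair i f h) : M.symbol 5 (f * h) = Pi.single i 1 := by
  rw [M.symbol_mul (k := 5) le_rfl (by decide) rfl H.f_mem_Fbar H.h_mem_Fbar, H.symbol_f,
    H.symbol_h, ← Pi.single_mul, one_mul]

lemma sq_sub_cube_mem_Fat (H : M.IsLiftPair i f h) : h ^ 2 - f ^ 3 ∈ M.Fat i 6 3 := by
  rw [sq, pow_three]
  refine sub_mem (M.Fat_mono le_rfl (by decide) (M.mul_mem_Fat rfl rfl H.h_mem H.h_mem)) ?_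
  exact M.mul_mem_Fat rfl rfl H.f_mem (M.mul_mem_Fat rfl rfl H.f_mem H.f_mem)

lemma sq_sub_cube_mem_Fbar_five (H : M.IsLiftPair i f h) : h ^ 2 - f ^ 3 ∈ M.Fbar 5 := by
  have hh2 : h * h ∈ M.Fbar 6 := M.mul_mem_Fbar rfl H.h_mem_Fbar H.h_mem_Fbar
  have hf3 : f * (f * f) ∈ M.Fbar 6 := M.mul_mem_Fbar rfl H.f_mem_Fbar H.sq_mem_Fbar
  rw [sq, pow_three, ← M.symbol_eq_zero_iff (m := 5) (n := 6) rfl (sub_mem hh2 hf3),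
    M.symbol_sub hh2 hf3,
    M.symbol_mul (k := 6) (by decide) (by decide) rfl H.h_mem_Fbar H.h_mem_Fbar,
    M.symbol_mul (k := 6) le_rfl (by decide) rfl H.f_mem_Fbar H.sq_mem_Fbar, H.symbol_h,
    H.symbol_f, H.symbol_sq, sub_self]

lemma add_smul_one_left (H : M.IsLiftPair i f h) (α : R) : M.IsLiftPair i (f + α • 1) h := by
  refine ⟨add_mem H.f_mem (M.Fbar_le_Fat (by decide) le_rfl (M.smul_one_mem_Fbar α 1)), H.h_mem, ?_,
    H.symbol_h⟩
  rw [M.symbol_add H.f_mem_Fbar (M.smul_one_mem_Fbar α 2), H.symbol_f,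
    M.symbol_eq_zero_of_mem (by decide) (M.smul_one_mem_Fbar α 1), add_zero]

lemma add_smul_f_right (H : M.IsLiftPair i f h) (β : R) : M.IsLiftPair i f (h + β • f) := by
  have hβf : β • f ∈ M.Fbar 2 := Submodule.smul_mem _ β H.f_mem_Fbar
  refine ⟨H.f_mem, add_mem H.h_mem (M.Fat_mono (by decide) le_rfl (Submodule.smul_mem _ β H.f_mem)),
    H.symbol_f, ?_⟩
  rw [M.symbol_add H.h_mem_Fbar (M.Fbar_mono (by decide) hβf), H.symbol_h,
    M.symbol_eq_zero_of_mem (by decide) hβf, add_zero]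

lemma add_smul_one_right (H : M.IsLiftPair i f h) (γ : R) : M.IsLiftPair i f (h + γ • 1) := by
  refine ⟨H.f_mem, add_mem H.h_mem (M.Fbar_le_Fat (by decide) le_rfl (M.smul_one_mem_Fbar γ 1)),
    H.symbol_f, ?_⟩
  rw [M.symbol_add H.h_mem_Fbar (M.smul_one_mem_Fbar γ 3), H.symbol_h,
    M.symbol_eq_zero_of_mem (by decide) (M.smul_one_mem_Fbar γ 1), add_zero]

lemma sq_sub_cube_add_smul_one_right (H : M.IsLiftPair i f h) (hx : h ^ 2 - f ^ 3 ∈ M.Fbar 3)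
    (γ : R) : (h + γ • 1) ^ 2 - f ^ 3 ∈ M.Fbar 3 ∧
      M.symbol 3 ((h + γ • 1) ^ 2 - f ^ 3) i = M.symbol 3 (h ^ 2 - f ^ 3) i + 2 * γ := by
  have hexp : (h + γ • 1) ^ 2 - f ^ 3 = h ^ 2 - f ^ 3 + (2 * γ) • h + (γ * γ) • (1 : A) := by
    simp only [Algebra.smul_def, map_mul, map_ofNat, mul_one]
    ring
  have hγh : (2 * γ) • h ∈ M.Fbar 3 := Submodule.smul_mem _ _ H.h_mem_Fbar
  have hγ1 := M.smul_one_mem_Fbar (γ * γ) 3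
  rw [hexp, M.symbol_add (add_mem hx hγh) hγ1, M.symbol_add hx hγh, M.symbol_smul _ H.h_mem_Fbar,
    H.symbol_h, M.symbol_eq_zero_of_mem (m := 1) (by decide) (M.smul_one_mem_Fbar _ _)]
  simpa using add_mem (add_mem hx hγh) hγ1

lemma exists_sq_sub_cube_mem_Fbar_four (h2 : IsUnit (2 : R)) (H : M.IsLiftPair i f h) :
    ∃ h', M.IsLiftPair i f h' ∧ h' ^ 2 - f ^ 3 ∈ M.Fbar 4 := by
  set x := h ^ 2 - f ^ 3 with hx_def
  have hx : x ∈ M.Fat i 5 4 := M.Fat_mono le_rfl (by decide)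
    (M.mem_Fat_inf (a := 6) (by decide) (by decide) H.sq_sub_cube_mem_Fat
      H.sq_sub_cube_mem_Fbar_five)
  obtain ⟨β, hβ⟩ : (2 : R) ∣ -M.symbol 5 x i := h2.dvd
  refine ⟨h + β • f, H.add_smul_f_right β, ?_⟩
  have hexp : (h + β • f) ^ 2 - f ^ 3 = (x - M.symbol 5 x i • (f * h)) + (β * β) • (f * f) := by
    rw [← neg_neg (M.symbol 5 x i), hβ, hx_def]
    simp only [Algebra.smul_def, map_mul, map_neg, map_ofNat]
    ring
  rw [hexp]
  exact add_mem (M.sub_symbol_smul_mem rfl hx H.mul_mem_Fbar H.symbol_mul)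
    (Submodule.smul_mem _ _ H.sq_mem_Fbar)

lemma exists_sq_sub_cube_mem_Fbar_three (h3 : IsUnit (3 : R)) (H : M.IsLiftPair i f h)
    (hx4 : h ^ 2 - f ^ 3 ∈ M.Fbar 4) :
    ∃ f', M.IsLiftPair i f' h ∧ h ^ 2 - f' ^ 3 ∈ M.Fbar 3 := by
  set x := h ^ 2 - f ^ 3 with hx_def
  have hx : x ∈ M.Fat i 4 3 := M.mem_Fat_inf (by decide) (by decide) H.sq_sub_cube_mem_Fat hx4
  obtain ⟨α, hα⟩ : (3 : R) ∣ M.symbol 4 x i := h3.dvd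
  refine ⟨f + α • 1, H.add_smul_one_left α, ?_⟩
  have hexp : h ^ 2 - (f + α • 1) ^ 3
      = (x - M.symbol 4 x i • (f * f)) - (3 * α * α) • f - (α ^ 3) • (1 : A) := by
    rw [hα, hx_def]
    simp only [Algebra.smul_def, map_mul, map_pow, map_ofNat, mul_one]
    ring
  rw [hexp]
  exact sub_mem (sub_mem (M.sub_symbol_smul_mem rfl hx H.sq_mem_Fbar H.symbol_sq)
    (Submodule.smul_mem _ _ (M.Fbar_mono (by decide) H.f_mem_Fbar))) (M.smul_one_mem_Fbar _ _)

lemma exists_symbol_sq_sub_cube_eq_zero (h2 : IsUnit (2 : R)) (H : M.IsLiftPair i f h)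
    (hx3 : h ^ 2 - f ^ 3 ∈ M.Fbar 3) :
    ∃ h', M.IsLiftPair i f h' ∧ h' ^ 2 - f ^ 3 ∈ M.Fbar 3 ∧
      M.symbol 3 (h' ^ 2 - f ^ 3) i = 0 := by
  obtain ⟨γ, hγ⟩ : (2 : R) ∣ -M.symbol 3 (h ^ 2 - f ^ 3) i := h2.dvd
  obtain ⟨hmem, hσ⟩ := H.sq_sub_cube_add_smul_one_right hx3 γ
  exact ⟨h + γ • 1, H.add_smul_one_right γ, hmem, by rw [hσ, ← hγ, add_neg_cancel]⟩

lemma exists_eq_add {f' h' : A} (H : M.IsLiftPair i f h) (H' : M.IsLiftPair i f' h') :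
    ∃ α β γ : R, f' = f + α • 1 ∧ h' = h + β • f + γ • 1 := by
  have hu : f' - f ∈ M.Fbar 1 := by
    rw [← M.symbol_eq_zero_iff (n := 2) rfl (sub_mem H'.f_mem_Fbar H.f_mem_Fbar),
      M.symbol_sub H'.f_mem_Fbar H.f_mem_Fbar, H'.symbol_f, H.symbol_f, sub_self]
  have hv2 : h' - h ∈ M.Fbar 2 := by
    rw [← M.symbol_eq_zero_iff (n := 3) rfl (sub_mem H'.h_mem_Fbar H.h_mem_Fbar),
      M.symbol_sub H'.h_mem_Fbar H.h_mem_Fbar, H'.symbol_h, H.symbol_h, sub_self]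
  have hv : h' - h ∈ M.Fat i 2 1 :=
    M.mem_Fat_inf (a := 3) (by decide) (by decide) (sub_mem H'.h_mem H.h_mem) hv2
  obtain ⟨α, hα⟩ := M.mem_Fbar_one_iff.mp hu
  obtain ⟨γ, hγ⟩ := M.mem_Fbar_one_iff.mp
    (M.sub_symbol_smul_mem (n := 2) rfl hv H.f_mem_Fbar H.symbol_f)
  exact ⟨α, M.symbol 2 (h' - h) i, γ, by rw [hα]; abel, by rw [hγ]; abel⟩

lemma eq_zero_of_add_smul_f_mem (h2 : IsUnit (2 : R)) (H : M.IsLiftPair i f h)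
    (hx : h ^ 2 - f ^ 3 ∈ M.Fbar 3) {α β γ : R}
    (hx' : (h + β • f + γ • 1) ^ 2 - (f + α • 1) ^ 3 ∈ M.Fbar 3) : β = 0 := by
  have hexp : (h + β • f + γ • 1) ^ 2 - (f + α • 1) ^ 3 = (2 * β) • (f * h) +
      (h ^ 2 - f ^ 3 + (β * β - 3 * α) • (f * f) + (2 * γ) • h + (2 * β * γ - 3 * α * α) • f +
        (γ * γ - α ^ 3) • (1 : A)) := by
    simp only [Algebra.smul_def, map_mul, map_sub, map_pow, map_ofNat, mul_one]
    ring
  have hz := add_mem (add_mem (add_mem (add_mem (M.Fbar_mono (by decide) hx)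
    (Submodule.smul_mem _ (β * β - 3 * α) H.sq_mem_Fbar))
    (Submodule.smul_mem _ (2 * γ) (M.Fbar_mono (by decide) H.h_mem_Fbar)))
    (Submodule.smul_mem _ (2 * β * γ - 3 * α * α) (M.Fbar_mono (by decide) H.f_mem_Fbar)))
    (M.smul_one_mem_Fbar (γ * γ - α ^ 3) 4)
  refine h2.mul_right_eq_zero.mp (M.eq_zero_of_smul_add_mem rfl H.mul_mem_Fbar H.symbol_mul hz ?_)
  rw [← hexp]
  exact M.Fbar_mono (by decide) hx'

lemma eq_zero_of_add_smul_one_left_mem (h3 : IsUnit (3 : R)) (H : M.IsLiftPair i f h)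
    (hx : h ^ 2 - f ^ 3 ∈ M.Fbar 3) {α γ : R}
    (hx' : (h + γ • 1) ^ 2 - (f + α • 1) ^ 3 ∈ M.Fbar 3) : α = 0 := by
  have hexp : (h + γ • 1) ^ 2 - (f + α • 1) ^ 3 = (-(3 * α)) • (f * f) +
      (h ^ 2 - f ^ 3 + (2 * γ) • h - (3 * α * α) • f + (γ * γ - α ^ 3) • (1 : A)) := by
    simp only [Algebra.smul_def, map_mul, map_neg, map_sub, map_pow, map_ofNat, mul_one]
    ring
  have hz := add_mem (sub_mem (add_mem hx (Submodule.smul_mem _ (2 * γ) H.h_mem_Fbar))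
    (Submodule.smul_mem _ (3 * α * α) (M.Fbar_mono (by decide) H.f_mem_Fbar)))
    (M.smul_one_mem_Fbar (γ * γ - α ^ 3) 3)
  refine h3.mul_right_eq_zero.mp (neg_eq_zero.mp
    (M.eq_zero_of_smul_add_mem rfl H.sq_mem_Fbar H.symbol_sq hz ?_))
  rw [← hexp]
  exact hx'

lemma eq_of_symbol_sq_sub_cube_eq_zero {f' h' : A} (h2 : IsUnit (2 : R)) (h3 : IsUnit (3 : R))
    (H : M.IsLiftPair i f h) (H' : M.IsLiftPair i f' h') (hx : h ^ 2 - f ^ 3 ∈ M.Fbar 3)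
    (hσx : M.symbol 3 (h ^ 2 - f ^ 3) i = 0) (hx' : h' ^ 2 - f' ^ 3 ∈ M.Fbar 3)
    (hσx' : M.symbol 3 (h' ^ 2 - f' ^ 3) i = 0) : f' = f ∧ h' = h := by
  obtain ⟨α, β, γ, rfl, rfl⟩ := H.exists_eq_add H'
  obtain rfl : β = 0 := H.eq_zero_of_add_smul_f_mem h2 hx hx'
  rw [zero_smul, add_zero] at hx' hσx'
  obtain rfl : α = 0 := H.eq_zero_of_add_smul_one_left_mem h3 hx hx'
  rw [zero_smul, add_zero, (H.sq_sub_cube_add_smul_one_right hx γ).2, hσx, zero_add] at hσx'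
  obtain rfl : γ = 0 := h2.mul_right_eq_zero.mp hσx'
  simp

end IsLiftPair

def IsNormalized (i : Fin g) (f h : A) : Prop :=
  f ∈ M.F (fun j => if j = i then 2 else 1) ∧
  h ∈ M.F (fun j => if j = i then 3 else 1) ∧
  (∃ h2 : f ∈ M.F (fun _ => 2), M.φ 2 ⟨f, h2⟩ = Pi.single i 1) ∧
  (∃ h3 : h ∈ M.F (fun _ => 3), M.φ 3 ⟨h, h3⟩ = Pi.single i 1) ∧
  h ^ 2 - f ^ 3 ∈ M.F (fun _ => 3) ∧
  f * h ^ 2 - f ^ 4 ∈ M.F (fun _ => 4)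

lemma isNormalized_iff {i : Fin g} {f h : A} : M.IsNormalized i f h ↔
    M.IsLiftPair i f h ∧ h ^ 2 - f ^ 3 ∈ M.Fbar 3 ∧ M.symbol 3 (h ^ 2 - f ^ 3) i = 0 := by
  have hfx : f * h ^ 2 - f ^ 4 = f * (h ^ 2 - f ^ 3) := by ring
  constructor
  · rintro ⟨hf, hh, hφf, hφh, hx, hfx4⟩
    have H : M.IsLiftPair i f h := ⟨hf, hh, (M.exists_φ_eq_iff hφf.1 _).mp hφf,
      (M.exists_φ_eq_iff hφh.1 _).mp hφh⟩
    refine ⟨H, hx, ?_⟩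
    rwa [hfx, M.mul_mem_iff_symbol_apply_eq_zero (n := 3) (k := 5) (l := 4) le_rfl (by decide)
      rfl rfl H.f_mem_Fbar H.symbol_f hx] at hfx4
  · rintro ⟨H, hx, hσx⟩
    refine ⟨H.f_mem, H.h_mem, (M.exists_φ_eq_iff H.f_mem_Fbar _).mpr H.symbol_f,
      (M.exists_φ_eq_iff H.h_mem_Fbar _).mpr H.symbol_h, hx, ?_⟩
    rwa [hfx, M.mul_mem_iff_symbol_apply_eq_zero (n := 3) (k := 5) (l := 4) le_rfl (by decide)
      rfl rfl H.f_mem_Fbar H.symbol_f hx]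

theorem existsUnique_isNormalized (h2 : IsUnit (2 : R)) (h3 : IsUnit (3 : R)) (i : Fin g) :
    ∃! fh : A × A, M.IsNormalized i fh.1 fh.2 := by
  simp only [isNormalized_iff]
  obtain ⟨f₀, h₀, H₀⟩ := M.exists_isLiftPair i
  obtain ⟨h₁, H₁, hx₁⟩ := H₀.exists_sq_sub_cube_mem_Fbar_four h2
  obtain ⟨f, H₂, hx₂⟩ := H₁.exists_sq_sub_cube_mem_Fbar_three h3 hx₁
  obtain ⟨h, H, hx, hσx⟩ := H₂.exists_symbol_sq_sub_cube_eq_zero h2 hx₂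
  refine ⟨(f, h), ⟨H, hx, hσx⟩, fun ⟨f', h'⟩ ⟨H', hx', hσx'⟩ => ?_⟩
  obtain ⟨rfl, rfl⟩ := H.eq_of_symbol_sq_sub_cube_eq_zero h2 h3 H' hx hσx hx' hσx'
  rfl

end MarkedAlgebra

/-- Lemma 1.6(i) of the paper.  Let `A` be a marked algebra of genus
`g` over a commutative ring `R` in which `6` is invertible.  Then there are unique
elements `fᵢ ∈ F_{D+pᵢ}A` and `hᵢ ∈ F_{D+2pᵢ}A` (`i = 1,…,g`) such that
`fᵢ ≡ eᵢt² mod F_D A`, `hᵢ ≡ eᵢt³ mod F_{2D}A`, `hᵢ² − fᵢ³ ∈ F_{3D}A`, and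
`fᵢhᵢ² − fᵢ⁴ ∈ F_{4D}A`. -/
theorem stmt7 {R A : Type*} [CommRing R] [CommRing A] [Algebra R A] (g : ℕ)
    (h6 : Invertible (6 : R)) (M : MarkedAlgebra R g A) :
    ∃! fh : (Fin g → A) × (Fin g → A), ∀ i : Fin g,
      fh.1 i ∈ M.F (fun j => if j = i then 2 else 1) ∧
      fh.2 i ∈ M.F (fun j => if j = i then 3 else 1) ∧
      (∃ h2 : fh.1 i ∈ M.F (fun _ => 2), M.φ 2 ⟨fh.1 i, h2⟩ = Pi.single i 1) ∧
      (∃ h3 : fh.2 i ∈ M.F (fun _ => 3), M.φ 3 ⟨fh.2 i, h3⟩ = Pi.single i 1) ∧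
      fh.2 i ^ 2 - fh.1 i ^ 3 ∈ M.F (fun _ => 3) ∧
      fh.1 i * fh.2 i ^ 2 - fh.1 i ^ 4 ∈ M.F (fun _ => 4) := by
  have h6' : IsUnit ((2 : R) * 3) := by
    rw [show (2 : R) * 3 = 6 by norm_num]
    exact isUnit_of_invertible 6
  choose fh hfh huniq using fun i => M.existsUnique_isNormalized
    (isUnit_of_mul_isUnit_left h6') (isUnit_of_mul_isUnit_right h6') i
  refine ⟨(fun i => (fh i).1, fun i => (fh i).2), hfh, fun q hq => ?_⟩
  ext i <;> simp only [← huniq i (q.1 i, q.2 i) (hq i)]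
end

section
/- Let G be a group scheme acting on a scheme X over a base, with an exact sequence of group schemes 1 → H → G → G′ → 1 admitting a scheme-theoretic section σ : G′ → G of the projection (not necessarily a homomorphism, with σ(1) = 1). Suppose X′ is a scheme with G′-action and f : X → X′ is a morphism compatible with the actions via G → G′. Assume: (a) S_H ⊆ X is a nice section for the H-action on X; (b) S′ ⊆ X′ is a nice section for the G′-action on X′; (c) for any scheme T and points x ∈ X(T), g ∈ G(T) with f(gx) = f(x), there exists h ∈ H(T) with gx = hx. Then S := S_H ∩ f^{-1}(S′) is a nice section for the G-action on X. -/
/-- A subset `S ⊆ X` is a *nice section* for the action of a group `G` on `X` if there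
are maps `ρ : X → G` and `π : X → S` such that `π` is `G`-invariant, `ρ` restricted to
`S` is constantly `1`, and `ρ(x) • π(x) = x` for all `x`.  (Following the paper's
definition; as permitted by the context, we work in the category of sets with group
actions.) -/
def IsNiceSection (G : Type*) [Group G] {X : Type*} [MulAction G X] (S : Set X) : Prop :=
  ∃ (ρ : X → G) (π : X → X),
    (∀ x : X, π x ∈ S) ∧ (∀ (g : G) (x : X), π (g • x) = π x) ∧
    (∀ x ∈ S, ρ x = 1) ∧ (∀ x : X, ρ x • π x = x)

/-!
Straighten `x` in two steps. First move it into `f⁻¹(S′)` by `σ(ρ′(f x))⁻¹`; since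
`σ(1) = 1` this does not move points already there. Two points of `f⁻¹(S′)` in one `G`-orbit
have equal images, because `S′` meets each `G′`-orbit once, so by (c) they lie in one
`H`-orbit; hence the nice section `S_H` of the `H`-action finishes the straightening.
-/

namespace IsNiceSection

variable {G X : Type*} [Group G] [MulAction G X]

theorem smul_eq_self {S : Set X} (hS : IsNiceSection G S) {s : X} (hs : s ∈ S) {g : G}
    (hgs : g • s ∈ S) : g • s = s := by
  obtain ⟨ρ, π, -, hπ_inv, hρ_one, hρπ⟩ := hS
  have fixed : ∀ t ∈ S, π t = t := fun t ht => by
    simpa [hρ_one t ht] using hρπ t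
  rw [← fixed _ hgs, hπ_inv, fixed _ hs]

theorem inter_of_retraction {K : Subgroup G} {S_K Y : Set X} (hS_K : IsNiceSection K S_K)
    (hY : ∀ k ∈ K, ∀ y ∈ Y, k • y ∈ Y) (τ : X → G) (hτ_mem : ∀ x, (τ x)⁻¹ • x ∈ Y)
    (hτ_one : ∀ y ∈ Y, τ y = 1)
    (h_orbit : ∀ y ∈ Y, ∀ g : G, g • y ∈ Y → ∃ k ∈ K, g • y = k • y) :
    IsNiceSection G (S_K ∩ Y) := by
  obtain ⟨ρK, πK, hπK_mem, hπK_inv, hρK_one, hρπK⟩ := hS_K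
  have hπK_Y : ∀ y ∈ Y, πK y ∈ Y := fun y hy => by
    rw [← inv_smul_smul (ρK y) (πK y), hρπK]
    exact hY _ (ρK y)⁻¹.2 y hy
  refine ⟨fun x => τ x * ρK ((τ x)⁻¹ • x), fun x => πK ((τ x)⁻¹ • x),
    fun x => ⟨hπK_mem _, hπK_Y _ (hτ_mem x)⟩, fun g x => ?_, fun x ⟨hxS, hxY⟩ => ?_,
    fun x => ?_⟩
  · have hmove : ((τ (g • x))⁻¹ * g * τ x) • (τ x)⁻¹ • x = (τ (g • x))⁻¹ • g • x := by
      simp only [mul_smul, smul_inv_smul]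
    obtain ⟨k, hk, hk_eq⟩ := h_orbit _ (hτ_mem x) _ (hmove ▸ hτ_mem (g • x))
    change πK _ = πK _
    rw [← hmove, hk_eq]
    exact hπK_inv ⟨k, hk⟩ _
  · simp [hτ_one x hxY, hρK_one x hxS]
  · rw [mul_smul, ← Subgroup.smul_def, hρπK, smul_inv_smul]

end IsNiceSection

theorem stmt11_general {G G' X X' : Type*} [Group G] [Group G']
    [MulAction G X] [MulAction G' X']
    (p : G →* G')
    (σ : G' → G) (hσ : ∀ g' : G', p (σ g') = g') (hσ1 : σ 1 = 1)
    (f : X → X') (hf : ∀ (g : G) (x : X), f (g • x) = p g • f x)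
    (S_H : Set X) (hSH : IsNiceSection (↥p.ker) S_H)
    (S' : Set X') (hS' : IsNiceSection G' S')
    (hcond : ∀ (x : X) (g : G), f (g • x) = f x → ∃ h ∈ p.ker, g • x = h • x) :
    IsNiceSection G (S_H ∩ f ⁻¹' S') := by
  obtain ⟨ρ', π', hπ'_mem, -, hρ'_one, hρπ'⟩ := id hS'
  refine hSH.inter_of_retraction (fun k hk y hy => ?_) (fun x => σ (ρ' (f x)))
    (fun x => ?_) (fun y hy => by simp [hρ'_one _ hy, hσ1]) (fun y hy g hgy => hcond y g ?_)
  · rwa [Set.mem_preimage, hf, (MonoidHom.mem_ker).1 hk, one_smul]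
  · rw [Set.mem_preimage, hf, map_inv, hσ, inv_smul_eq_iff.2 (hρπ' (f x)).symm]
    exact hπ'_mem _
  · rw [Set.mem_preimage, hf] at hgy
    rw [hf, hS'.smul_eq_self hy hgy]

/-- Let `G` act on `X`, with an exact sequence
`1 → H → G →p→ G′ → 1` (so `H = ker p`, `p` surjective) admitting a set-theoretic section
`σ` of `p` with `σ(1) = 1`.  Let `X′` carry a `G′`-action and `f : X → X′` be equivariant
via `p`.  Assume: (a) `S_H` is a nice section for the `H`-action on `X`; (b) `S′` is a
nice section for the `G′`-action on `X′`; (c) whenever `f(g • x) = f(x)` there is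
`h ∈ H` with `g • x = h • x`.  Then `S := S_H ∩ f⁻¹(S′)` is a nice section for the
`G`-action on `X`. -/
theorem stmt11 {G G' X X' : Type*} [Group G] [Group G']
    [MulAction G X] [MulAction G' X']
    (p : G →* G') (hp : Function.Surjective p)
    (σ : G' → G) (hσ : ∀ g' : G', p (σ g') = g') (hσ1 : σ 1 = 1)
    (f : X → X') (hf : ∀ (g : G) (x : X), f (g • x) = p g • f x)
    (S_H : Set X) (hSH : IsNiceSection (↥p.ker) S_H)
    (S' : Set X') (hS' : IsNiceSection G' S')
    (hcond : ∀ (x : X) (g : G), f (g • x) = f x → ∃ h ∈ p.ker, g • x = h • x) :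
    IsNiceSection G (S_H ∩ f ⁻¹' S') :=
  stmt11_general p σ hσ hσ1 f hf S_H hSH S' hS' hcond
end

section
/- Let C be a reduced connected complete curve of arithmetic genus 0 over an algebraically closed field with n ≥ 3 smooth marked points p_1,…,p_n such that every irreducible component contains a marked point, and choose f_i ∈ H^0(C, O_C(p_i)) with principal part a fixed nonzero tangent vector at p_i. Set α_{ij} = f_i(p_j) for i ≠ j. Then for all distinct i, j, k, l: α_{ik}α_{jk} − α_{ij}α_{jk} − α_{ji}α_{ik} = α_{il}α_{jl} − α_{ij}α_{jl} − α_{ji}α_{il}, and f_i f_j = α_{ij} f_j + α_{ji} f_i + c_{ij} where c_{ij} is the common value α_{ik}α_{jk} − α_{ij}α_{jk} − α_{ji}α_{ik}. -/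
/-!
Put `αᵢⱼ = fᵢ(pⱼ)` and `g = fᵢfⱼ − αᵢⱼfⱼ − αⱼᵢfᵢ`. Since `fⱼ − αᵢⱼ` vanishes at `pᵢ`, the
principal part of `(fⱼ − αᵢⱼ)fᵢ` at `pᵢ` cancels, so `g` is regular at `pᵢ`; symmetrically it
is regular at `pⱼ`. Hence `g ∈ H⁰(C, O) = k`, and evaluating `g` at any third marked point
`pₖ` computes this constant, which therefore does not depend on the choice of that point.
-/

lemma Pi.single_inf_single_of_ne {ι : Type*} [DecidableEq ι] {i j : ι} (hij : i ≠ j) :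
    (Pi.single i 1 ⊓ Pi.single j 1 : ι → ℕ) = 0 := by
  ext m
  by_cases hm : m = i
  · subst hm
    simp [Pi.single_eq_of_ne hij]
  · simp [Pi.single_eq_of_ne hm]

lemma Submodule.mul_sub_smul_mem {k A : Type*} [CommRing k] [Ring A] [Algebra k A]
    {V : Submodule k A} (hV1 : (1 : A) ∈ V) {φ : A →ₗ[k] k} (hφ1 : φ 1 = 1) {f : A}
    (hf : ∀ x ∈ V, φ x = 0 → x * f ∈ V) {x : A} (hx : x ∈ V) :
    x * f - φ x • f ∈ V := by
  have hx' : x - φ x • 1 ∈ V := V.sub_mem hx (V.smul_mem _ hV1)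
  have h := hf _ hx' (by simp [hφ1])
  rwa [sub_mul, smul_mul_assoc, one_mul] at h

lemma LinearMap.eq_of_mul_eq {k A : Type*} [CommRing k] [Ring A] [Algebra k A]
    {φ : A →ₗ[k] k} (hφ1 : φ 1 = 1) {x y : A} (hφxy : φ (x * y) = φ x * φ y) {a b c : k}
    (h : x * y = a • y + b • x + c • 1) :
    c = φ x * φ y - a * φ y - b * φ x := by
  have h' := congrArg φ h
  simp only [map_add, map_smul, hφ1, smul_eq_mul, mul_one, hφxy] at h'
  rw [h']
  ring

section Filtration

variable {k A ι : Type*} [CommRing k] [CommRing A] [Algebra k A]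
  {L : (ι → ℕ) → Submodule k A}

lemma one_mem_of_eq_span_one (hL0 : L 0 = Submodule.span k {1}) (hmono : Monotone L)
    (ν : ι → ℕ) : (1 : A) ∈ L ν :=
  hmono (zero_le : 0 ≤ ν) (hL0 ▸ Submodule.mem_span_singleton_self 1)

variable [DecidableEq ι] {ev : ι → A →ₗ[k] k} {f : ι → A}

lemma mul_sub_smul_sub_smul_mem (hL0 : L 0 = Submodule.span k {1}) (hmono : Monotone L)
    (hev1 : ∀ j, ev j 1 = 1) (hf : ∀ i, f i ∈ L (Pi.single i 1))
    (hprin : ∀ i ν, ν i = 0 → ∀ x ∈ L ν, ev i x = 0 → x * f i ∈ L ν)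
    {i j : ι} (hij : i ≠ j) :
    f i * f j - ev j (f i) • f j - ev i (f j) • f i ∈ L (Pi.single j 1) := by
  have hfji : f j * f i - ev i (f j) • f i ∈ L (Pi.single j 1) :=
    Submodule.mul_sub_smul_mem (one_mem_of_eq_span_one hL0 hmono _) (hev1 i)
      (hprin i _ (Pi.single_eq_of_ne hij 1)) (hf j)
  have h := Submodule.sub_mem _ hfji (Submodule.smul_mem _ (ev j (f i)) (hf j))
  rwa [mul_comm, sub_right_comm] at h

lemma exists_mul_eq_smul_add_smul_add_smul_one (hL0 : L 0 = Submodule.span k {1})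
    (hmono : Monotone L) (hinf : ∀ ν μ, L (ν ⊓ μ) = L ν ⊓ L μ) (hev1 : ∀ j, ev j 1 = 1)
    (hf : ∀ i, f i ∈ L (Pi.single i 1))
    (hprin : ∀ i ν, ν i = 0 → ∀ x ∈ L ν, ev i x = 0 → x * f i ∈ L ν)
    {i j : ι} (hij : i ≠ j) :
    ∃ c : k, f i * f j = ev j (f i) • f j + ev i (f j) • f i + c • 1 := by
  have hj := mul_sub_smul_sub_smul_mem hL0 hmono hev1 hf hprin hij
  have hi := mul_sub_smul_sub_smul_mem hL0 hmono hev1 hf hprin hij.symm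
  rw [mul_comm, sub_right_comm] at hi
  have h0 : f i * f j - ev j (f i) • f j - ev i (f j) • f i ∈ L 0 := by
    rw [← Pi.single_inf_single_of_ne hij, hinf]
    exact ⟨hi, hj⟩
  obtain ⟨c, hc⟩ := Submodule.mem_span_singleton.mp (hL0 ▸ h0)
  exact ⟨c, by rw [hc]; abel⟩

end Filtration

/-- Encoding: `A = H⁰(C ∖ {p₁,…,pₙ}, O)`, `L ν = H⁰(C, O(∑ νᵢ pᵢ))`, `ev j` is evaluation at
`pⱼ`, and `hprin` says that `fᵢ` has principal part the fixed tangent vector at `pᵢ`: if `x` is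
regular at `pᵢ` and vanishes there, then `x fᵢ` is regular at `pᵢ` with the same poles. -/
theorem stmt18_general {k A : Type*} [Field k] [CommRing A] [Algebra k A]
    (n : ℕ)
    (L : (Fin n → ℕ) → Submodule k A)
    (hL0 : L 0 = Submodule.span k {1})
    (hmono : Monotone L)
    (hinf : ∀ ν μ, L (ν ⊓ μ) = L ν ⊓ L μ)
    (ev : Fin n → (A →ₗ[k] k))
    (hev1 : ∀ j, ev j 1 = 1)
    (hevmul : ∀ (j : Fin n) (ν μ : Fin n → ℕ), ν j = 0 → μ j = 0 →
      ∀ x ∈ L ν, ∀ y ∈ L μ, ev j (x * y) = ev j x * ev j y)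
    (f : Fin n → A)
    (hf : ∀ i, f i ∈ L (Pi.single i 1))
    (hprin : ∀ (i : Fin n) (ν : Fin n → ℕ), ν i = 0 →
      ∀ x ∈ L ν, ev i x = 0 → x * f i ∈ L ν) :
    (∀ i j kk l : Fin n, i ≠ j → i ≠ kk → i ≠ l → j ≠ kk → j ≠ l → kk ≠ l →
      ev kk (f i) * ev kk (f j) - ev j (f i) * ev kk (f j) - ev i (f j) * ev kk (f i) =
        ev l (f i) * ev l (f j) - ev j (f i) * ev l (f j) - ev i (f j) * ev l (f i)) ∧
    (∀ i j kk : Fin n, i ≠ j → i ≠ kk → j ≠ kk →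
      f i * f j = ev j (f i) • f j + ev i (f j) • f i +
        (ev kk (f i) * ev kk (f j) - ev j (f i) * ev kk (f j) -
          ev i (f j) * ev kk (f i)) • (1 : A)) := by
  have hconst : ∀ i j, i ≠ j → ∃ c : k,
      f i * f j = ev j (f i) • f j + ev i (f j) • f i + c • 1 ∧
      ∀ kk, i ≠ kk → j ≠ kk →
        c = ev kk (f i) * ev kk (f j) - ev j (f i) * ev kk (f j) - ev i (f j) * ev kk (f i) := by
    intro i j hij
    obtain ⟨c, hc⟩ := exists_mul_eq_smul_add_smul_add_smul_one hL0 hmono hinf hev1 hf hprin hij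
    refine ⟨c, hc, fun kk hik hjk => LinearMap.eq_of_mul_eq (hev1 kk) ?_ hc⟩
    exact hevmul kk _ _ (Pi.single_eq_of_ne' hik 1) (Pi.single_eq_of_ne' hjk 1) _ (hf i) _ (hf j)
  refine ⟨fun i j kk l hij hik hil hjk hjl _ => ?_, fun i j kk hij hik hjk => ?_⟩
  · obtain ⟨c, -, hval⟩ := hconst i j hij
    rw [← hval kk hik hjk, ← hval l hil hjl]
  · obtain ⟨c, hc, hval⟩ := hconst i j hij
    rw [hc, hval kk hik hjk]

/-- Let `C` be a reduced connected complete curve of arithmetic genus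
`0` over an algebraically closed field `k`, with `n ≥ 3` smooth marked points
`p₁, …, pₙ` such that every irreducible component contains a marked point, and choose
`fᵢ ∈ H⁰(C, O(pᵢ))` with principal part a fixed nonzero tangent vector at `pᵢ`.  Set
`αᵢⱼ = fᵢ(pⱼ)` for `i ≠ j`.  Then for all distinct `i, j, k, l`:
`αᵢₖαⱼₖ − αᵢⱼαⱼₖ − αⱼᵢαᵢₖ = αᵢₗαⱼₗ − αᵢⱼαⱼₗ − αⱼᵢαᵢₗ`, and
`fᵢfⱼ = αᵢⱼfⱼ + αⱼᵢfᵢ + cᵢⱼ` where `cᵢⱼ` is this common value.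

As Mathlib has no cohomology of curves, the geometric situation is encoded through
standard data, following the context:
* `A = H⁰(C ∖ {p₁,…,pₙ}, O)` is a commutative `k`-algebra;
* `L ν = H⁰(C, O(∑ νᵢ pᵢ))` is a filtration of `A` by `k`-subspaces: `L 0 = k·1`
  (arithmetic genus 0, connected, reduced), monotone, with `L(min) = L ∩ L` and
  `L ν · L μ ⊆ L (ν + μ)`, and `dim L ν = 1 + ∑ νᵢ` (`H¹ = 0`);
* `ev j` is evaluation at `pⱼ` (a linear functional on `A`, unital and multiplicative on
  the functions regular at `pⱼ`, i.e. on the `L ν` with `ν j = 0`);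
* `fᵢ ∈ L(pᵢ)` has a genuine pole at `pᵢ` (`fᵢ ∉ L ν` whenever `ν i = 0`), and its
  principal part is the fixed tangent vector: if `x` is regular at `pᵢ` and vanishes
  there (`ev i x = 0`), then `x·fᵢ` is again regular at `pᵢ` with the same poles
  (`x·fᵢ ∈ L ν`). -/
theorem stmt18 {k A : Type*} [Field k] [IsAlgClosed k] [CommRing A] [Algebra k A]
    (n : ℕ) (hn : 3 ≤ n)
    (L : (Fin n → ℕ) → Submodule k A)
    (hL0 : L 0 = Submodule.span k {1})
    (hmono : Monotone L)
    (hinf : ∀ ν μ, L (ν ⊓ μ) = L ν ⊓ L μ)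
    (hmul : ∀ (ν μ : Fin n → ℕ) (x y : A), x ∈ L ν → y ∈ L μ → x * y ∈ L (ν + μ))
    (hrank : ∀ ν, Module.finrank k (L ν) = 1 + ∑ i, ν i)
    (hexh : (⨆ ν, L ν) = ⊤)
    (ev : Fin n → (A →ₗ[k] k))
    (hev1 : ∀ j, ev j 1 = 1)
    (hevmul : ∀ (j : Fin n) (ν μ : Fin n → ℕ), ν j = 0 → μ j = 0 →
      ∀ x ∈ L ν, ∀ y ∈ L μ, ev j (x * y) = ev j x * ev j y)
    (f : Fin n → A)
    (hf : ∀ i, f i ∈ L (Pi.single i 1))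
    (hpole : ∀ (i : Fin n) (ν : Fin n → ℕ), ν i = 0 → f i ∉ L ν)
    (hprin : ∀ (i : Fin n) (ν : Fin n → ℕ), ν i = 0 →
      ∀ x ∈ L ν, ev i x = 0 → x * f i ∈ L ν) :
    (∀ i j kk l : Fin n, i ≠ j → i ≠ kk → i ≠ l → j ≠ kk → j ≠ l → kk ≠ l →
      ev kk (f i) * ev kk (f j) - ev j (f i) * ev kk (f j) - ev i (f j) * ev kk (f i) =
        ev l (f i) * ev l (f j) - ev j (f i) * ev l (f j) - ev i (f j) * ev l (f i)) ∧
    (∀ i j kk : Fin n, i ≠ j → i ≠ kk → j ≠ kk →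
      f i * f j = ev j (f i) • f j + ev i (f j) • f i +
        (ev kk (f i) * ev kk (f j) - ev j (f i) * ev kk (f j) -
          ev i (f j) * ev kk (f i)) • (1 : A)) :=
  stmt18_general n L hL0 hmono hinf ev hev1 hevmul f hf hprin
end
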